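/- arXiv:2203.12801 — 4 statements merged into one kernel-verified Lean document; each statement's English description precedes it below -/
import Mathlib

section
/- Let U be a finite set, ℓ an integer with 1 ≤ ℓ < |U|, and 𝓕 a family of ℓ-element subsets of U, considered along a sequence of instances in which |𝓕| and |U| tend to infinity. Suppose there exists a constant c > 0 such that for every instance, ∑_{k=1}^{ℓ−1} c^k · |𝓕|^{k/ℓ} · |I_k(𝓕)| ≤ |𝓕|². Then |𝓕|^{−1/ℓ} is a threshold function for the event Γ that the random subset X contains at least one element of 𝓕; that is, Pr[Γ] → 0 whenever θ = o(|𝓕|^{−1/ℓ}) and Pr[Γ] → 1 whenever θ = ω(|𝓕|^{−1/ℓ}), as |𝓕| → ∞. -/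
/-!
Let `Z` count the members of `𝓕` contained in `X`, so `E Z = |𝓕| θ^ℓ` and
`E Z² = ∑_k |I_k(𝓕)| θ^(2ℓ-k)`. Markov's inequality `Pr[Z > 0] ≤ E Z` gives the 0-statement.
For the 1-statement, Cauchy–Schwarz gives `(E Z)² ≤ Pr[Z > 0] · E Z²`. When
`θ ≥ M |𝓕|^(-1/ℓ)` with `M ≥ 1`, `cM ≥ 1`, we have `E Z ≥ M`; the term `k = 0` of `E Z²` is at
most `(E Z)²`, the term `k = ℓ` is at most `E Z ≤ (E Z)² / M`, and the hypothesis on the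
`|I_k(𝓕)|` bounds the terms `0 < k < ℓ` by `(E Z)² / (cM)`. Hence `Pr[Z > 0] ≥ 1 - (1 + c⁻¹) / M`.
-/

open Filter Asymptotics

noncomputable def prRandomSubset {α : Type*} (U : Finset α) (θ : ℝ)
    (E : Finset α → Prop) : ℝ :=
  ∑ A ∈ U.powerset,
    @ite ℝ (E A) (Classical.propDecidable _)
      (θ ^ A.card * (1 - θ) ^ (U.card - A.card)) 0

def interPairs {α : Type*} [DecidableEq α] (F : Finset (Finset α)) (k : ℕ) :
    Finset (Finset α × Finset α) :=
  (F ×ˢ F).filter fun p => (p.1 ∩ p.2).card = k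

open Finset

namespace RandomSubset

variable {α : Type*}

noncomputable def weight (U : Finset α) (θ : ℝ) (A : Finset α) : ℝ :=
  θ ^ #A * (1 - θ) ^ (#U - #A)

noncomputable def expectation (U : Finset α) (θ : ℝ) (f : Finset α → ℝ) : ℝ :=
  ∑ A ∈ U.powerset, weight U θ A * f A

variable {U : Finset α} {θ : ℝ}

lemma weight_nonneg (h0 : 0 ≤ θ) (h1 : θ ≤ 1) (A : Finset α) : 0 ≤ weight U θ A :=
  mul_nonneg (pow_nonneg h0 _) (pow_nonneg (sub_nonneg.2 h1) _)

lemma sum_weight (U : Finset α) (θ : ℝ) : ∑ A ∈ U.powerset, weight U θ A = 1 := by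
  simp [weight, sum_pow_mul_eq_add_pow]

variable [DecidableEq α]

lemma sum_weight_Icc {S : Finset α} (hS : S ⊆ U) :
    ∑ A ∈ Icc S U, weight U θ A = θ ^ #S := by
  have hdisj : ∀ B ∈ (U \ S).powerset, Disjoint S B := fun B hB =>
    disjoint_of_subset_right (mem_powerset.1 hB) disjoint_sdiff
  rw [Icc_eq_image_powerset hS, sum_image fun B hB B' hB' h => by
    rw [← union_sdiff_cancel_left (hdisj B hB), ← union_sdiff_cancel_left (hdisj B' hB')]
    exact congrArg (· \ S) h]
  calc ∑ B ∈ (U \ S).powerset, weight U θ (S ∪ B)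
      = ∑ B ∈ (U \ S).powerset, θ ^ #S * weight (U \ S) θ B := by
        refine sum_congr rfl fun B hB => ?_
        rw [weight, weight, card_union_of_disjoint (hdisj B hB), card_sdiff_of_subset hS,
          pow_add, Nat.sub_add_eq]
        ring
    _ = θ ^ #S := by rw [← mul_sum, sum_weight, mul_one]

lemma expectation_card_filter_subset {ι : Type*} (s : Finset ι) (S : ι → Finset α)
    (hS : ∀ i ∈ s, S i ⊆ U) :
    expectation U θ (fun A => #{i ∈ s | S i ⊆ A}) = ∑ i ∈ s, θ ^ #(S i) := by
  simp_rw [expectation, natCast_card_filter, mul_sum]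
  rw [sum_comm]
  refine sum_congr rfl fun i hi => ?_
  simp_rw [mul_ite, mul_one, mul_zero, ← sum_filter, ← Icc_eq_filter_powerset]
  exact sum_weight_Icc (hS i hi)

end RandomSubset

open RandomSubset

section Moments

variable {α : Type*} {U : Finset α} {θ : ℝ}

lemma prRandomSubset_eq_sum_filter (E : Finset α → Prop) [DecidablePred E] :
    prRandomSubset U θ E = ∑ A ∈ U.powerset with E A, weight U θ A := by
  rw [sum_filter, prRandomSubset]
  refine sum_congr rfl fun A _ => ?_
  split_ifs <;> rfl

variable (h0 : 0 ≤ θ) (h1 : θ ≤ 1)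
include h0 h1

lemma prRandomSubset_nonneg (E : Finset α → Prop) : 0 ≤ prRandomSubset U θ E := by
  classical
  rw [prRandomSubset_eq_sum_filter]
  exact sum_nonneg fun A _ => weight_nonneg h0 h1 A

lemma prRandomSubset_le_one (E : Finset α → Prop) : prRandomSubset U θ E ≤ 1 := by
  classical
  rw [prRandomSubset_eq_sum_filter, ← sum_weight U θ]
  exact sum_le_sum_of_subset_of_nonneg (filter_subset _ _) fun A _ _ => weight_nonneg h0 h1 A

lemma prRandomSubset_le_expectation {E : Finset α → Prop} {f : Finset α → ℝ}
    (hf0 : ∀ A, 0 ≤ f A) (hf : ∀ A, E A → 1 ≤ f A) :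
    prRandomSubset U θ E ≤ expectation U θ f := by
  classical
  rw [prRandomSubset_eq_sum_filter, expectation, sum_filter]
  gcongr with A
  have hw := weight_nonneg (U := U) h0 h1 A
  split_ifs with hA
  · exact le_mul_of_one_le_right hw (hf A hA)
  · exact mul_nonneg hw (hf0 A)

lemma sq_expectation_le_prRandomSubset_mul {E : Finset α → Prop} {f : Finset α → ℝ}
    (hf : ∀ A, ¬E A → f A = 0) :
    expectation U θ f ^ 2 ≤ prRandomSubset U θ E * expectation U θ (fun A => f A ^ 2) := by
  classical
  have hw := weight_nonneg (U := U) h0 h1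
  have hsupp : expectation U θ f = ∑ A ∈ U.powerset with E A, weight U θ A * f A := by
    rw [expectation, sum_filter]
    refine sum_congr rfl fun A _ => ?_
    split_ifs with hA
    · rfl
    · rw [hf A hA, mul_zero]
  rw [hsupp, prRandomSubset_eq_sum_filter]
  calc _ ≤ (∑ A ∈ U.powerset with E A, weight U θ A) *
        ∑ A ∈ U.powerset with E A, weight U θ A * f A ^ 2 :=
        sum_sq_le_sum_mul_sum_of_sq_le_mul _ (fun A _ => hw A)
          (fun A _ => mul_nonneg (hw A) (sq_nonneg _)) fun A _ => le_of_eq (by ring)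
    _ ≤ _ := mul_le_mul_of_nonneg_left
        (sum_le_sum_of_subset_of_nonneg (filter_subset _ _) fun A _ _ =>
          mul_nonneg (hw A) (sq_nonneg _))
        (sum_nonneg fun A _ => hw A)

end Moments

section Counting

variable {α : Type*} [DecidableEq α] {U : Finset α} {F : Finset (Finset α)} {ℓ : ℕ} {θ : ℝ}

lemma card_filter_subset_sq (F : Finset (Finset α)) (A : Finset α) :
    #{S ∈ F | S ⊆ A} ^ 2 = #{p ∈ F ×ˢ F | p.1 ∪ p.2 ⊆ A} := by
  rw [sq, ← card_product, ← filter_product]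
  simp only [union_subset_iff]

lemma sum_pow_card_union_eq (hF : ∀ S ∈ F, #S = ℓ) (θ : ℝ) :
    ∑ p ∈ F ×ˢ F, θ ^ #(p.1 ∪ p.2) =
      ∑ k ∈ range (ℓ + 1), (#(interPairs F k) : ℝ) * θ ^ (2 * ℓ - k) := by
  have hmaps : ∀ p ∈ F ×ˢ F, #(p.1 ∩ p.2) ∈ range (ℓ + 1) := fun p hp => by
    rw [mem_range, Nat.lt_succ_iff, ← hF _ (mem_product.1 hp).1]
    exact card_le_card inter_subset_left
  rw [← sum_fiberwise_of_maps_to hmaps]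
  refine sum_congr rfl fun k _ => ?_
  rw [← nsmul_eq_mul, ← sum_const, interPairs]
  refine sum_congr rfl fun p hp => ?_
  obtain ⟨hpF, hk⟩ := mem_filter.1 hp
  have := card_union_add_card_inter p.1 p.2
  rw [hF _ (mem_product.1 hpF).1, hF _ (mem_product.1 hpF).2, hk] at this
  rw [show #(p.1 ∪ p.2) = 2 * ℓ - k by omega]

variable (hF : ∀ S ∈ F, S ⊆ U ∧ #S = ℓ)
include hF

lemma expectation_card_filter_subset_eq :
    expectation U θ (fun A => #{S ∈ F | S ⊆ A}) = #F * θ ^ ℓ := by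
  have h := expectation_card_filter_subset (U := U) (θ := θ) F id fun S hS => (hF S hS).1
  simp only [id] at h
  rw [h, sum_congr rfl fun S hS => by rw [(hF S hS).2], sum_const, nsmul_eq_mul]

lemma expectation_card_filter_subset_sq_eq :
    expectation U θ (fun A => (#{S ∈ F | S ⊆ A} : ℝ) ^ 2) =
      ∑ k ∈ range (ℓ + 1), (#(interPairs F k) : ℝ) * θ ^ (2 * ℓ - k) := by
  simp_rw [← Nat.cast_pow, card_filter_subset_sq]
  rw [expectation_card_filter_subset (F ×ˢ F) (fun p => p.1 ∪ p.2) fun p hp =>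
    union_subset (hF _ (mem_product.1 hp).1).1 (hF _ (mem_product.1 hp).2).1]
  exact sum_pow_card_union_eq (fun S hS => (hF S hS).2) θ

variable (h0 : 0 ≤ θ) (h1 : θ ≤ 1)
include h0 h1

lemma prRandomSubset_le_card_mul_pow :
    prRandomSubset U θ (fun A => ∃ S ∈ F, S ⊆ A) ≤ #F * θ ^ ℓ := by
  rw [← expectation_card_filter_subset_eq hF]
  refine prRandomSubset_le_expectation h0 h1 (fun A => Nat.cast_nonneg _) ?_
  rintro A ⟨S, hSF, hSA⟩
  exact Nat.one_le_cast.2 (card_pos.2 ⟨S, mem_filter.2 ⟨hSF, hSA⟩⟩)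

lemma sq_card_mul_pow_le :
    ((#F : ℝ) * θ ^ ℓ) ^ 2 ≤ prRandomSubset U θ (fun A => ∃ S ∈ F, S ⊆ A) *
      ∑ k ∈ range (ℓ + 1), (#(interPairs F k) : ℝ) * θ ^ (2 * ℓ - k) := by
  rw [← expectation_card_filter_subset_eq hF, ← expectation_card_filter_subset_sq_eq hF]
  refine sq_expectation_le_prRandomSubset_mul h0 h1 fun A hA => ?_
  rw [Nat.cast_eq_zero, card_eq_zero, filter_eq_empty_iff]
  exact fun S hS hSA => hA ⟨S, hS, hSA⟩

end Counting

lemma card_interPairs_le_sq {α : Type*} [DecidableEq α] (F : Finset (Finset α)) (k : ℕ) :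
    #(interPairs F k) ≤ #F ^ 2 :=
  (card_filter_le _ _).trans (by rw [card_product, sq])

lemma card_interPairs_self_le {α : Type*} [DecidableEq α] {F : Finset (Finset α)} {ℓ : ℕ}
    (hF : ∀ S ∈ F, #S = ℓ) : #(interPairs F ℓ) ≤ #F := by
  refine (card_le_card fun p hp => ?_).trans (diag_card F).le
  obtain ⟨hpF, hk⟩ := mem_filter.1 hp
  obtain ⟨h1, h2⟩ := mem_product.1 hpF
  have e1 : p.1 ∩ p.2 = p.1 := eq_of_subset_of_card_le inter_subset_left (by rw [hk, hF _ h1])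
  have e2 : p.1 ∩ p.2 = p.2 := eq_of_subset_of_card_le inter_subset_right (by rw [hk, hF _ h2])
  exact mem_diag.2 ⟨h1, e1.symm.trans e2⟩

lemma rpow_neg_one_div_pow {n : ℝ} (hn : 0 ≤ n) (ℓ k : ℕ) :
    (n ^ (-(1 : ℝ) / ℓ)) ^ k = (n ^ ((k : ℝ) / ℓ))⁻¹ := by
  rw [← Real.rpow_natCast, ← Real.rpow_mul hn, ← Real.rpow_neg hn]
  ring_nf

lemma pow_le_rpow_mul_pow {n M θ : ℝ} {ℓ : ℕ} (hn : 0 < n) (hM : 0 ≤ M)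
    (h : M * n ^ (-(1 : ℝ) / ℓ) ≤ θ) (k : ℕ) : M ^ k ≤ n ^ ((k : ℝ) / ℓ) * θ ^ k := by
  have hk := pow_le_pow_left₀ (by positivity) h k
  rwa [mul_pow, rpow_neg_one_div_pow hn.le, ← div_eq_mul_inv,
    div_le_iff₀' (by positivity)] at hk

lemma le_mul_pow_of_mul_rpow_le {n M θ : ℝ} {ℓ : ℕ} (hℓ : ℓ ≠ 0) (hn : 0 < n) (hM : 1 ≤ M)
    (h : M * n ^ (-(1 : ℝ) / ℓ) ≤ θ) : M ≤ n * θ ^ ℓ :=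
  calc M ≤ M ^ ℓ := le_self_pow₀ hM hℓ
    _ ≤ n ^ ((ℓ : ℝ) / ℓ) * θ ^ ℓ := pow_le_rpow_mul_pow hn (by linarith) h ℓ
    _ = n * θ ^ ℓ := by rw [div_self (Nat.cast_ne_zero.2 hℓ), Real.rpow_one]

section PairSums

variable {α : Type*} [DecidableEq α] {F : Finset (Finset α)} {ℓ : ℕ} {θ c M : ℝ}

lemma sum_Ico_card_interPairs_mul_pow_le (hc : 0 ≤ c) (hθ : 0 ≤ θ) (hcM : 1 ≤ c * M)
    (hn : 0 < (#F : ℝ)) (hMθ : M * (#F : ℝ) ^ (-(1 : ℝ) / ℓ) ≤ θ)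
    (hcond : ∑ k ∈ Ico 1 ℓ, c ^ k * (#F : ℝ) ^ ((k : ℝ) / ℓ) * #(interPairs F k) ≤ #F ^ 2) :
    ∑ k ∈ Ico 1 ℓ, (#(interPairs F k) : ℝ) * θ ^ (2 * ℓ - k) ≤ (c * M)⁻¹ * (#F * θ ^ ℓ) ^ 2 := by
  have hM : 0 ≤ M := by nlinarith
  have hcM0 : 0 < c * M := by linarith
  calc ∑ k ∈ Ico 1 ℓ, (#(interPairs F k) : ℝ) * θ ^ (2 * ℓ - k)
      ≤ ∑ k ∈ Ico 1 ℓ, (c * M)⁻¹ * θ ^ (2 * ℓ) *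
          (c ^ k * (#F : ℝ) ^ ((k : ℝ) / ℓ) * #(interPairs F k)) := by
        refine sum_le_sum fun k hk => ?_
        obtain ⟨hk1, hkℓ⟩ := mem_Ico.1 hk
        have hθk : c * M ≤ c ^ k * ((#F : ℝ) ^ ((k : ℝ) / ℓ) * θ ^ k) :=
          calc c * M ≤ (c * M) ^ k := le_self_pow₀ hcM (by omega)
            _ = c ^ k * M ^ k := mul_pow c M k
            _ ≤ _ := by gcongr; exact pow_le_rpow_mul_pow hn hM hMθ k
        calc (#(interPairs F k) : ℝ) * θ ^ (2 * ℓ - k)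
            = (c * M)⁻¹ * (c * M * (#(interPairs F k) * θ ^ (2 * ℓ - k))) :=
              (inv_mul_cancel_left₀ hcM0.ne' _).symm
          _ ≤ (c * M)⁻¹ * (c ^ k * ((#F : ℝ) ^ ((k : ℝ) / ℓ) * θ ^ k) *
                (#(interPairs F k) * θ ^ (2 * ℓ - k))) := by
              gcongr
          _ = (c * M)⁻¹ * (θ ^ (2 * ℓ - k) * θ ^ k) *
                (c ^ k * (#F : ℝ) ^ ((k : ℝ) / ℓ) * #(interPairs F k)) := by ring
          _ = _ := by rw [pow_sub_mul_pow θ (by omega)]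
    _ = (c * M)⁻¹ * θ ^ (2 * ℓ) *
          ∑ k ∈ Ico 1 ℓ, c ^ k * (#F : ℝ) ^ ((k : ℝ) / ℓ) * #(interPairs F k) := by
        rw [mul_sum]
    _ ≤ (c * M)⁻¹ * θ ^ (2 * ℓ) * #F ^ 2 := by gcongr
    _ = (c * M)⁻¹ * (#F * θ ^ ℓ) ^ 2 := by ring

lemma sum_card_interPairs_mul_pow_le (hF : ∀ S ∈ F, #S = ℓ) (hℓ : ℓ ≠ 0) (hc : 0 ≤ c)
    (hθ : 0 ≤ θ) (hn : 0 < (#F : ℝ)) (hM : 1 ≤ M) (hcM : 1 ≤ c * M)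
    (hMθ : M * (#F : ℝ) ^ (-(1 : ℝ) / ℓ) ≤ θ)
    (hcond : ∑ k ∈ Ico 1 ℓ, c ^ k * (#F : ℝ) ^ ((k : ℝ) / ℓ) * #(interPairs F k) ≤ #F ^ 2) :
    ∑ k ∈ range (ℓ + 1), (#(interPairs F k) : ℝ) * θ ^ (2 * ℓ - k) ≤
      (1 + (1 + c⁻¹) / M) * (#F * θ ^ ℓ) ^ 2 := by
  set μ : ℝ := #F * θ ^ ℓ
  have hμ : M ≤ μ := le_mul_pow_of_mul_rpow_le hℓ hn hM hMθ
  have hdisjoint : (#(interPairs F 0) : ℝ) * θ ^ (2 * ℓ) ≤ μ ^ 2 :=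
    calc (#(interPairs F 0) : ℝ) * θ ^ (2 * ℓ) ≤ (#F : ℝ) ^ 2 * θ ^ (2 * ℓ) := by
          gcongr; exact_mod_cast card_interPairs_le_sq F 0
      _ = μ ^ 2 := by ring
  have hequal : (#(interPairs F ℓ) : ℝ) * θ ^ ℓ ≤ M⁻¹ * μ ^ 2 :=
    calc (#(interPairs F ℓ) : ℝ) * θ ^ ℓ ≤ #F * θ ^ ℓ := by
          gcongr; exact_mod_cast card_interPairs_self_le hF
      _ ≤ M⁻¹ * μ ^ 2 := by
          rw [inv_mul_eq_div, le_div_iff₀ (by linarith), sq]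
          exact mul_le_mul_of_nonneg_left hμ (by linarith)
  have hmid := sum_Ico_card_interPairs_mul_pow_le hc hθ hcM hn hMθ hcond
  rw [sum_range_succ, range_eq_Ico, sum_eq_sum_Ico_succ_bot (Nat.pos_of_ne_zero hℓ),
    Nat.sub_zero, show 2 * ℓ - ℓ = ℓ by omega]
  have hsplit : (1 + (1 + c⁻¹) / M) * μ ^ 2 = μ ^ 2 + (c * M)⁻¹ * μ ^ 2 + M⁻¹ * μ ^ 2 := by
    rw [mul_inv]; ring
  linarith

end PairSums

section Threshold

variable {α : Type*} [DecidableEq α] {U : Finset α} {F : Finset (Finset α)} {ℓ : ℕ} {θ : ℝ}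
  (hF : ∀ S ∈ F, S ⊆ U ∧ #S = ℓ) (hℓ : ℓ ≠ 0) (h0 : 0 ≤ θ) (h1 : θ ≤ 1) (hn : 0 < (#F : ℝ))
include hF hℓ h0 h1 hn

theorem prRandomSubset_le_pow_of_le_mul {t : ℝ} (ht : θ ≤ t * (#F : ℝ) ^ (-(1 : ℝ) / ℓ)) :
    prRandomSubset U θ (fun A => ∃ S ∈ F, S ⊆ A) ≤ t ^ ℓ :=
  calc prRandomSubset U θ (fun A => ∃ S ∈ F, S ⊆ A) ≤ #F * θ ^ ℓ :=
        prRandomSubset_le_card_mul_pow hF h0 h1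
    _ ≤ #F * (t * (#F : ℝ) ^ (-(1 : ℝ) / ℓ)) ^ ℓ := by gcongr
    _ = t ^ ℓ := by
        rw [mul_pow, rpow_neg_one_div_pow hn.le, div_self (Nat.cast_ne_zero.2 hℓ),
          Real.rpow_one, mul_left_comm, mul_inv_cancel₀ hn.ne', mul_one]

theorem one_sub_le_prRandomSubset {c M : ℝ} (hc : 0 ≤ c) (hM : 1 ≤ M) (hcM : 1 ≤ c * M)
    (hMθ : M * (#F : ℝ) ^ (-(1 : ℝ) / ℓ) ≤ θ)
    (hcond : ∑ k ∈ Ico 1 ℓ, c ^ k * (#F : ℝ) ^ ((k : ℝ) / ℓ) * #(interPairs F k) ≤ #F ^ 2) :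
    1 - (1 + c⁻¹) / M ≤ prRandomSubset U θ (fun A => ∃ S ∈ F, S ⊆ A) := by
  set P := prRandomSubset U θ (fun A => ∃ S ∈ F, S ⊆ A)
  set a := (1 + c⁻¹) / M
  have hμ : 0 < ((#F : ℝ) * θ ^ ℓ) ^ 2 :=
    pow_pos (by linarith [le_mul_pow_of_mul_rpow_le hℓ hn hM hMθ]) 2
  have hsecond := (sq_card_mul_pow_le hF h0 h1).trans (mul_le_mul_of_nonneg_left
    (sum_card_interPairs_mul_pow_le (fun S hS => (hF S hS).2) hℓ hc h0 hn hM hcM hMθ hcond)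
    (prRandomSubset_nonneg h0 h1 _))
  have h1a : 1 ≤ P * (1 + a) := by
    rw [← mul_assoc] at hsecond
    exact le_of_mul_le_mul_right (by linarith) hμ
  have ha : 0 ≤ a := by positivity
  nlinarith [prRandomSubset_le_one (U := U) h0 h1 (fun A => ∃ S ∈ F, S ⊆ A)]

theorem prRandomSubset_le_div_of_div_le_one (hle : θ / (#F : ℝ) ^ (-(1 : ℝ) / ℓ) ≤ 1) :
    prRandomSubset U θ (fun A => ∃ S ∈ F, S ⊆ A) ≤ θ / (#F : ℝ) ^ (-(1 : ℝ) / ℓ) := by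
  have hf : 0 < (#F : ℝ) ^ (-(1 : ℝ) / ℓ) := Real.rpow_pos_of_pos hn _
  calc _ ≤ (θ / (#F : ℝ) ^ (-(1 : ℝ) / ℓ)) ^ ℓ :=
        prRandomSubset_le_pow_of_le_mul hF hℓ h0 h1 hn (div_mul_cancel₀ _ hf.ne').ge
    _ ≤ _ := pow_le_of_le_one (div_nonneg h0 hf.le) hle hℓ

theorem one_sub_mul_div_le_prRandomSubset {c : ℝ} (hc : 0 < c)
    (hbound : (#F : ℝ) ^ (-(1 : ℝ) / ℓ) ≤ min 1 c * θ)
    (hcond : ∑ k ∈ Ico 1 ℓ, c ^ k * (#F : ℝ) ^ ((k : ℝ) / ℓ) * #(interPairs F k) ≤ #F ^ 2) :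
    1 - (1 + c⁻¹) * ((#F : ℝ) ^ (-(1 : ℝ) / ℓ) / θ) ≤
      prRandomSubset U θ (fun A => ∃ S ∈ F, S ⊆ A) := by
  set f := (#F : ℝ) ^ (-(1 : ℝ) / ℓ)
  have hf : 0 < f := Real.rpow_pos_of_pos hn _
  have hθ : 0 < θ := by
    by_contra! h
    nlinarith [min_le_right 1 c, le_antisymm h h0]
  have hM : 1 ≤ θ / f := (one_le_div hf).2 (by nlinarith [min_le_left 1 c])
  have hcM : 1 ≤ c * (θ / f) := by
    rw [mul_div_assoc', one_le_div hf]
    nlinarith [min_le_right 1 c]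
  have := one_sub_le_prRandomSubset hF hℓ h0 h1 hn hc.le hM hcM (div_mul_cancel₀ _ hf.ne').le hcond
  rwa [div_div_eq_mul_div, mul_div_assoc] at this

end Threshold

theorem stmt0_general (α : ℕ → Type*) [∀ i, DecidableEq (α i)]
    (U : ∀ i, Finset (α i)) (ℓ : ℕ → ℕ)
    (F : ∀ i, Finset (Finset (α i)))
    (hℓ : ∀ i, 1 ≤ ℓ i ∧ ℓ i < (U i).card)
    (hF : ∀ i, ∀ S ∈ F i, S ⊆ U i ∧ S.card = ℓ i)
    (hFtop : Tendsto (fun i => (F i).card) atTop atTop)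
    (c : ℝ) (hc : 0 < c)
    (hcond : ∀ i, ∑ k ∈ Finset.Ico 1 (ℓ i),
        c ^ k * ((F i).card : ℝ) ^ ((k : ℝ) / (ℓ i : ℝ)) * ((interPairs (F i) k).card : ℝ)
        ≤ ((F i).card : ℝ) ^ 2)
    (θ : ℕ → ℝ) (hθ : ∀ i, 0 ≤ θ i ∧ θ i ≤ 1) :
    (θ =o[atTop] (fun i => ((F i).card : ℝ) ^ (-(1 : ℝ) / (ℓ i : ℝ))) →
      Tendsto (fun i => prRandomSubset (U i) (θ i) (fun A => ∃ S ∈ F i, S ⊆ A))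
        atTop (nhds 0)) ∧
    ((fun i => ((F i).card : ℝ) ^ (-(1 : ℝ) / (ℓ i : ℝ))) =o[atTop] θ →
      Tendsto (fun i => prRandomSubset (U i) (θ i) (fun A => ∃ S ∈ F i, S ⊆ A))
        atTop (nhds 1)) := by
  have hℓ0 : ∀ i, ℓ i ≠ 0 := fun i => Nat.one_le_iff_ne_zero.1 (hℓ i).1
  have hn : ∀ᶠ i in atTop, (0 : ℝ) < #(F i) :=
    (hFtop.eventually_gt_atTop 0).mono fun i hi => Nat.cast_pos.2 hi
  refine ⟨fun hsmall => ?_, fun hbig => ?_⟩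
  · have hratio := hsmall.tendsto_div_nhds_zero
    refine tendsto_of_tendsto_of_tendsto_of_le_of_le' tendsto_const_nhds hratio
      (Eventually.of_forall fun i => prRandomSubset_nonneg (hθ i).1 (hθ i).2 _) ?_
    filter_upwards [hn, hratio.eventually (ge_mem_nhds zero_lt_one)] with i hni hle
    exact prRandomSubset_le_div_of_div_le_one (hF i) (hℓ0 i) (hθ i).1 (hθ i).2 hni hle
  · rw [← tendsto_sub_nhds_zero_iff]
    have hratio := (hbig.tendsto_div_nhds_zero.const_mul (1 + c⁻¹)).neg
    rw [mul_zero, neg_zero] at hratio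
    refine tendsto_of_tendsto_of_tendsto_of_le_of_le' hratio tendsto_const_nhds ?_
      (Eventually.of_forall fun i => sub_nonpos.2 (prRandomSubset_le_one (hθ i).1 (hθ i).2 _))
    filter_upwards [hn, hbig.bound (lt_min one_pos hc)] with i hni hbound
    rw [Real.norm_of_nonneg (by positivity), Real.norm_of_nonneg (hθ i).1] at hbound
    have := one_sub_mul_div_le_prRandomSubset (hF i) (hℓ0 i) (hθ i).1 (hθ i).2 hni hc hbound
      (hcond i)
    linarith

theorem stmt0 (α : ℕ → Type*) [∀ i, DecidableEq (α i)]
    (U : ∀ i, Finset (α i)) (ℓ : ℕ → ℕ)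
    (F : ∀ i, Finset (Finset (α i)))
    (hℓ : ∀ i, 1 ≤ ℓ i ∧ ℓ i < (U i).card)
    (hF : ∀ i, ∀ S ∈ F i, S ⊆ U i ∧ S.card = ℓ i)
    (hFtop : Tendsto (fun i => (F i).card) atTop atTop)
    (hUtop : Tendsto (fun i => (U i).card) atTop atTop)
    (c : ℝ) (hc : 0 < c)
    (hcond : ∀ i, ∑ k ∈ Finset.Ico 1 (ℓ i),
        c ^ k * ((F i).card : ℝ) ^ ((k : ℝ) / (ℓ i : ℝ)) * ((interPairs (F i) k).card : ℝ)
        ≤ ((F i).card : ℝ) ^ 2)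
    (θ : ℕ → ℝ) (hθ : ∀ i, 0 ≤ θ i ∧ θ i ≤ 1) :
    (θ =o[atTop] (fun i => ((F i).card : ℝ) ^ (-(1 : ℝ) / (ℓ i : ℝ))) →
      Tendsto (fun i => prRandomSubset (U i) (θ i) (fun A => ∃ S ∈ F i, S ⊆ A))
        atTop (nhds 0)) ∧
    ((fun i => ((F i).card : ℝ) ^ (-(1 : ℝ) / (ℓ i : ℝ))) =o[atTop] θ →
      Tendsto (fun i => prRandomSubset (U i) (θ i) (fun A => ∃ S ∈ F i, S ⊆ A))
        atTop (nhds 1)) :=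
  stmt0_general α U ℓ F hℓ hF hFtop c hc hcond θ hθ
end

section
/- Let 𝓕 be a family of ℓ-element subsets of F_q^n (q a prime power), with ℓ a fixed positive integer, and suppose there exist integer constants b > 0 and c ≥ 0 such that |𝓕| = Θ(q^{bn−c}). Assume that for every set S of k distinct points of F_q^n, the number of elements of 𝓕 containing S is O(q^{(b−k)n−c}) if 1 ≤ k ≤ b−1, and O(1) otherwise. Then, as q + n → ∞, the event Γ that the random subset X of F_q^n contains an element of 𝓕 has threshold function q^{(c−bn)/ℓ}. -/
/-!
Let `X A = #{S ∈ 𝓕 | S ⊆ A}` count the members of `𝓕` inside the random set `A`, so that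
`𝔼 X = |𝓕| θ^ℓ`, of the order of `(θ / q^((c - bn)/ℓ))^ℓ`. Below the threshold, Markov's inequality
`ℙ[X > 0] ≤ 𝔼 X` suffices. Above it, Cauchy–Schwarz gives `(𝔼 X)² ≤ 𝔼 X² · ℙ[X > 0]`. Sorting the
pairs `(S, T)` by `k = |S ∩ T|` and counting those with `|S ∩ T| = k` through the `k`-subsets of `S`
gives `𝔼 X² ≤ (𝔼 X)² (1 + ∑_{k=1}^{ℓ} C(ℓ,k) g_k / (|𝓕| θ^k))`, where `g_k` bounds the number of
members through a `k`-set. Each `|𝓕| θ^k / g_k` tends to infinity: for `k < b` it is of the order of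
`(q^n θ)^k`, and `(q^n θ)^ℓ ≥ |𝓕| θ^ℓ` because `|𝓕| ≤ q^(nℓ)`; for `k ≥ b` it is of the order of
`|𝓕| θ^k`, whose `ℓ`-th power is at least `(|𝓕| θ^ℓ)^k`.
-/

open Filter Asymptotics

open Finset Topology

section UniformFamily

lemma sum_pow_card_of_card_eq {α : Type*} {𝓕 : Finset (Finset α)} {ℓ : ℕ}
    (h𝓕 : ∀ S ∈ 𝓕, #S = ℓ) (θ : ℝ) :
    ∑ S ∈ 𝓕, θ ^ #S = #𝓕 * θ ^ ℓ := by
  rw [sum_congr rfl fun S hS => by rw [h𝓕 S hS], sum_const, nsmul_eq_mul]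

variable {α : Type*} [DecidableEq α]

lemma card_filter_card_inter_eq_le (𝓕 : Finset (Finset α)) (S : Finset α) (k : ℕ) {D : ℝ}
    (hD : ∀ U ⊆ S, #U = k → (#{T ∈ 𝓕 | U ⊆ T} : ℝ) ≤ D) :
    (#{T ∈ 𝓕 | #(S ∩ T) = k} : ℝ) ≤ (#S).choose k * D :=
  calc (#{T ∈ 𝓕 | #(S ∩ T) = k} : ℝ)
      ≤ ∑ U ∈ S.powersetCard k, (#{T ∈ 𝓕 | U ⊆ T} : ℝ) := by
        rw [← Nat.cast_sum, Nat.cast_le]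
        refine (card_le_card fun T hT => ?_).trans card_biUnion_le
        rw [mem_filter] at hT
        exact mem_biUnion.2 ⟨S ∩ T, mem_powersetCard.2 ⟨inter_subset_left, hT.2⟩,
          mem_filter.2 ⟨hT.1, inter_subset_right⟩⟩
    _ ≤ ∑ _U ∈ S.powersetCard k, D :=
        sum_le_sum fun U hU => hD U (mem_powersetCard.1 hU).1 (mem_powersetCard.1 hU).2
    _ = (#S).choose k * D := by rw [sum_const, card_powersetCard, nsmul_eq_mul]

lemma sum_pow_card_union_le {θ : ℝ} (h0 : 0 ≤ θ) {ℓ : ℕ} {𝓕 : Finset (Finset α)}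
    (h𝓕 : ∀ S ∈ 𝓕, #S = ℓ) {g : ℕ → ℝ}
    (hg : ∀ U : Finset α, 1 ≤ #U → #U ≤ ℓ → (#{T ∈ 𝓕 | U ⊆ T} : ℝ) ≤ g #U)
    {S : Finset α} (hS : S ∈ 𝓕) :
    ∑ T ∈ 𝓕, θ ^ #(S ∪ T) ≤
      #𝓕 * θ ^ (2 * ℓ) + ∑ k ∈ Icc 1 ℓ, ℓ.choose k * g k * θ ^ (2 * ℓ - k) := by
  have hmaps : ∀ T ∈ 𝓕, #(S ∩ T) ∈ insert 0 (Icc 1 ℓ) := fun T _ => by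
    have := card_le_card (inter_subset_left (s₁ := S) (s₂ := T))
    rw [h𝓕 S hS] at this
    rw [mem_insert, mem_Icc]
    omega
  have hfiber : ∀ k, ∑ T ∈ 𝓕 with #(S ∩ T) = k, θ ^ #(S ∪ T) =
      #{T ∈ 𝓕 | #(S ∩ T) = k} * θ ^ (2 * ℓ - k) := fun k => by
    rw [← nsmul_eq_mul, ← sum_const]
    refine sum_congr rfl fun T hT => ?_
    rw [mem_filter] at hT
    have := card_union_add_card_inter S T
    rw [h𝓕 S hS, h𝓕 T hT.1, hT.2] at this
    congr 1
    omega
  rw [← sum_fiberwise_of_maps_to hmaps, sum_insert (by simp)]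
  simp only [hfiber, Nat.sub_zero]
  refine add_le_add (mul_le_mul_of_nonneg_right ?_ (pow_nonneg h0 _))
    (sum_le_sum fun k hk => mul_le_mul_of_nonneg_right ?_ (pow_nonneg h0 _))
  · exact_mod_cast card_le_card (filter_subset _ _)
  · rw [← h𝓕 S hS]
    rw [mem_Icc] at hk
    refine card_filter_card_inter_eq_le 𝓕 S k fun U hUS hU => ?_
    rw [← hU]
    exact hg U (hU ▸ hk.1) (hU ▸ hk.2)

end UniformFamily

section RandomSubset

variable {α : Type*} [Fintype α]

noncomputable def subsetProb (θ : ℝ) (A : Finset α) : ℝ :=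
  θ ^ #A * (1 - θ) ^ (Fintype.card α - #A)

variable {θ : ℝ}

lemma subsetProb_nonneg (h0 : 0 ≤ θ) (h1 : θ ≤ 1) (A : Finset α) : 0 ≤ subsetProb θ A := by
  have : 0 ≤ 1 - θ := by linarith
  unfold subsetProb
  positivity

lemma sum_subsetProb (θ : ℝ) : ∑ A : Finset α, subsetProb θ A = 1 := by
  simpa [subsetProb] using sum_pow_mul_eq_add_pow θ (1 - θ) (univ : Finset α)

lemma card_le_card_pow_of_card_eq {ℓ : ℕ} {𝓕 : Finset (Finset α)} (h𝓕 : ∀ S ∈ 𝓕, #S = ℓ) :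
    #𝓕 ≤ Fintype.card α ^ ℓ :=
  calc #𝓕 ≤ #(powersetCard ℓ (univ : Finset α)) :=
        card_le_card fun S hS => mem_powersetCard.2 ⟨subset_univ S, h𝓕 S hS⟩
    _ = (Fintype.card α).choose ℓ := by rw [card_powersetCard, card_univ]
    _ ≤ Fintype.card α ^ ℓ := Nat.choose_le_pow _ _

lemma prRandomSubset_univ_eq_sum_filter (θ : ℝ) (E : Finset α → Prop) [DecidablePred E] :
    prRandomSubset univ θ E = ∑ A with E A, subsetProb θ A := by
  rw [prRandomSubset, powerset_univ, sum_filter]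
  refine sum_congr rfl fun A _ => ?_
  simp only [subsetProb, card_univ]
  congr

lemma prRandomSubset_univ_nonneg (h0 : 0 ≤ θ) (h1 : θ ≤ 1) (E : Finset α → Prop) :
    0 ≤ prRandomSubset univ θ E := by
  classical
  rw [prRandomSubset_univ_eq_sum_filter]
  exact sum_nonneg fun A _ => subsetProb_nonneg h0 h1 A

lemma prRandomSubset_univ_le_one (h0 : 0 ≤ θ) (h1 : θ ≤ 1) (E : Finset α → Prop) :
    prRandomSubset univ θ E ≤ 1 := by
  classical
  rw [prRandomSubset_univ_eq_sum_filter, ← sum_subsetProb (α := α) θ]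
  exact sum_le_sum_of_subset_of_nonneg (filter_subset _ _)
    fun A _ _ => subsetProb_nonneg h0 h1 A

variable [DecidableEq α]

lemma sum_subsetProb_filter_superset (θ : ℝ) (S : Finset α) :
    ∑ A with S ⊆ A, subsetProb θ A = θ ^ #S := by
  -- expand `∏ a, (θ + [a ∉ S] (1 - θ)) = θ ^ #S` into a sum over subsets
  have key := Fintype.prod_add (fun _ : α => θ) (fun a => if a ∉ S then 1 - θ else 0)
  have hlhs : ∏ a : α, (θ + if a ∉ S then 1 - θ else 0) = ∏ a : α, if a ∈ S then θ else 1 :=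
    Fintype.prod_congr _ _ fun a => by split_ifs <;> ring
  rw [hlhs, prod_ite_mem, univ_inter, prod_const] at key
  rw [key, sum_filter]
  refine sum_congr rfl fun A _ => ?_
  simp only [prod_const, prod_ite_zero, mem_compl, card_compl, subsetProb]
  have hsub : (∀ a ∉ A, a ∉ S) ↔ S ⊆ A :=
    ⟨fun h a haS => not_not.1 fun ha => h a ha haS, fun h a ha haS => ha (h haS)⟩
  simp only [hsub, mul_ite, mul_zero]

lemma sum_subsetProb_mul_card_filter_subset {ι : Type*} (θ : ℝ) (𝓖 : Finset ι)
    (s : ι → Finset α) :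
    ∑ A, subsetProb θ A * #{j ∈ 𝓖 | s j ⊆ A} = ∑ j ∈ 𝓖, θ ^ #(s j) := by
  simp_rw [card_filter, Nat.cast_sum, mul_sum]
  rw [sum_comm]
  refine sum_congr rfl fun j _ => ?_
  rw [← sum_subsetProb_filter_superset, sum_filter]
  simp

lemma sum_subsetProb_mul_card_filter_subset_sq (θ : ℝ) (𝓕 : Finset (Finset α)) :
    ∑ A, subsetProb θ A * (#{S ∈ 𝓕 | S ⊆ A} : ℝ) ^ 2 = ∑ S ∈ 𝓕, ∑ T ∈ 𝓕, θ ^ #(S ∪ T) := by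
  have hsq : ∀ A : Finset α, (#{S ∈ 𝓕 | S ⊆ A} : ℝ) ^ 2 = #{p ∈ 𝓕 ×ˢ 𝓕 | p.1 ∪ p.2 ⊆ A} := by
    intro A
    simp only [union_subset_iff]
    rw [filter_product (fun S => S ⊆ A) (fun S => S ⊆ A), card_product, Nat.cast_mul, sq]
  simp_rw [hsq, sum_subsetProb_mul_card_filter_subset, sum_product]

lemma prRandomSubset_univ_le_sum_pow_card (h0 : 0 ≤ θ) (h1 : θ ≤ 1) (𝓕 : Finset (Finset α)) :
    prRandomSubset univ θ (fun A => ∃ S ∈ 𝓕, S ⊆ A) ≤ ∑ S ∈ 𝓕, θ ^ #S := by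
  rw [prRandomSubset_univ_eq_sum_filter, ← sum_subsetProb_mul_card_filter_subset θ 𝓕 fun S => S]
  calc ∑ A with ∃ S ∈ 𝓕, S ⊆ A, subsetProb θ A
      ≤ ∑ A with ∃ S ∈ 𝓕, S ⊆ A, subsetProb θ A * #{S ∈ 𝓕 | S ⊆ A} := by
        refine sum_le_sum fun A hA => le_mul_of_one_le_right (subsetProb_nonneg h0 h1 A) ?_
        rw [mem_filter, ← filter_nonempty_iff, ← card_pos] at hA
        exact_mod_cast hA.2
    _ ≤ ∑ A, subsetProb θ A * #{S ∈ 𝓕 | S ⊆ A} :=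
        sum_le_sum_of_subset_of_nonneg (filter_subset _ _)
          fun A _ _ => mul_nonneg (subsetProb_nonneg h0 h1 A) (Nat.cast_nonneg _)

lemma sq_sum_pow_card_le_mul_prRandomSubset_univ (h0 : 0 ≤ θ) (h1 : θ ≤ 1)
    (𝓕 : Finset (Finset α)) :
    (∑ S ∈ 𝓕, θ ^ #S) ^ 2 ≤
      (∑ S ∈ 𝓕, ∑ T ∈ 𝓕, θ ^ #(S ∪ T)) * prRandomSubset univ θ (fun A => ∃ S ∈ 𝓕, S ⊆ A) := by
  rw [prRandomSubset_univ_eq_sum_filter, ← sum_subsetProb_mul_card_filter_subset θ 𝓕 fun S => S,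
    ← sum_subsetProb_mul_card_filter_subset_sq]
  set X : Finset α → ℝ := fun A => #{S ∈ 𝓕 | S ⊆ A}
  have hX : ∀ A, X A ≠ 0 → ∃ S ∈ 𝓕, S ⊆ A := fun A hA => by
    rw [← filter_nonempty_iff, ← card_pos]
    exact Nat.pos_of_ne_zero fun h => hA (by simp [X, h])
  calc (∑ A, subsetProb θ A * X A) ^ 2
      = (∑ A with ∃ S ∈ 𝓕, S ⊆ A, subsetProb θ A * X A) ^ 2 := by
        rw [sum_filter_of_ne fun A _ hA => hX A (right_ne_zero_of_mul hA)]
    _ ≤ (∑ A with ∃ S ∈ 𝓕, S ⊆ A, subsetProb θ A * X A ^ 2) *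
          ∑ A with ∃ S ∈ 𝓕, S ⊆ A, subsetProb θ A :=
        sum_sq_le_sum_mul_sum_of_sq_le_mul _
          (fun A _ => mul_nonneg (subsetProb_nonneg h0 h1 A) (sq_nonneg _))
          (fun A _ => subsetProb_nonneg h0 h1 A) fun A _ => le_of_eq (by ring)
    _ ≤ (∑ A, subsetProb θ A * X A ^ 2) * ∑ A with ∃ S ∈ 𝓕, S ⊆ A, subsetProb θ A :=
        mul_le_mul_of_nonneg_right
          (sum_le_sum_of_subset_of_nonneg (filter_subset _ _)
            fun A _ _ => mul_nonneg (subsetProb_nonneg h0 h1 A) (sq_nonneg _))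
          (sum_nonneg fun A _ => subsetProb_nonneg h0 h1 A)

lemma one_sub_sum_le_prRandomSubset_univ (h0 : 0 < θ) (h1 : θ ≤ 1) {ℓ : ℕ}
    {𝓕 : Finset (Finset α)} (h𝓕 : ∀ S ∈ 𝓕, #S = ℓ) (h𝓕ne : 𝓕.Nonempty) {g : ℕ → ℝ}
    (hg0 : ∀ k ∈ Icc 1 ℓ, 0 ≤ g k)
    (hg : ∀ U : Finset α, 1 ≤ #U → #U ≤ ℓ → (#{T ∈ 𝓕 | U ⊆ T} : ℝ) ≤ g #U) :
    1 - ∑ k ∈ Icc 1 ℓ, ℓ.choose k * g k / (#𝓕 * θ ^ k) ≤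
      prRandomSubset univ θ (fun A => ∃ S ∈ 𝓕, S ⊆ A) := by
  set P := prRandomSubset univ θ (fun A => ∃ S ∈ 𝓕, S ⊆ A)
  set r := ∑ k ∈ Icc 1 ℓ, ℓ.choose k * g k / (#𝓕 * θ ^ k)
  have hN : (0 : ℝ) < #𝓕 := by exact_mod_cast h𝓕ne.card_pos
  have hr : 0 ≤ r := sum_nonneg fun k hk => by have := hg0 k hk; positivity
  have hsecond : ∑ S ∈ 𝓕, ∑ T ∈ 𝓕, θ ^ #(S ∪ T) ≤ (#𝓕 * θ ^ ℓ) ^ 2 * (1 + r) :=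
    calc ∑ S ∈ 𝓕, ∑ T ∈ 𝓕, θ ^ #(S ∪ T)
        ≤ ∑ _S ∈ 𝓕, (#𝓕 * θ ^ (2 * ℓ) + ∑ k ∈ Icc 1 ℓ, ℓ.choose k * g k * θ ^ (2 * ℓ - k)) :=
          sum_le_sum fun S hS => sum_pow_card_union_le h0.le h𝓕 hg hS
      _ = (#𝓕 * θ ^ ℓ) ^ 2 * (1 + r) := by
          rw [sum_const, nsmul_eq_mul, mul_add, mul_add, mul_one, mul_sum, mul_sum]
          congr 1
          · ring
          refine sum_congr rfl fun k hk => ?_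
          have hθk : θ ^ (2 * ℓ - k) * θ ^ k = θ ^ (2 * ℓ) := by
            rw [← pow_add, Nat.sub_add_cancel (by linarith [(mem_Icc.1 hk).2])]
          field_simp
          rw [← pow_mul, mul_comm ℓ 2, ← hθk]
          ring
  have hCS := sq_sum_pow_card_le_mul_prRandomSubset_univ h0.le h1 𝓕
  rw [sum_pow_card_of_card_eq h𝓕] at hCS
  have hP0 : 0 ≤ P := prRandomSubset_univ_nonneg h0.le h1 _
  have hP1 : P ≤ 1 := prRandomSubset_univ_le_one h0.le h1 _
  have hM : 0 < (#𝓕 * θ ^ ℓ) ^ 2 := by positivity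
  have h1r : 1 ≤ (1 + r) * P := by
    refine le_of_mul_le_mul_left ?_ hM
    calc (#𝓕 * θ ^ ℓ) ^ 2 * 1 ≤ (#𝓕 * θ ^ ℓ) ^ 2 * (1 + r) * P := by
          simpa using hCS.trans (mul_le_mul_of_nonneg_right hsecond hP0)
      _ = _ := by ring
  nlinarith [mul_le_mul_of_nonneg_left hP1 hr]

end RandomSubset

section ZeroOneLaws

variable {ι : Type*} {l : Filter ι}

lemma tendsto_atTop_of_mul_le_pow {f g : ι → ℝ} {m : ℕ} (hm : m ≠ 0) {κ : ℝ} (hκ : 0 < κ)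
    (hg : Tendsto g l atTop) (hf : ∀ᶠ i in l, 0 ≤ f i) (hfg : ∀ᶠ i in l, κ * g i ≤ f i ^ m) :
    Tendsto f l atTop := by
  have hfm : Tendsto (fun i => f i ^ m) l atTop :=
    tendsto_atTop_mono' l hfg (hg.const_mul_atTop hκ)
  refine tendsto_atTop.2 fun K => ?_
  filter_upwards [hfm.eventually_ge_atTop (max K 0 ^ m), hf] with i hi hfi
  exact (le_max_left K 0).trans ((pow_le_pow_iff_left₀ (le_max_right K 0) hfi hm).1 hi)

variable {α : ι → Type*} [∀ i, Fintype (α i)] [∀ i, DecidableEq (α i)]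
  {𝓕 : ∀ i, Finset (Finset (α i))} {ℓ : ℕ} {θ : ι → ℝ}

theorem tendsto_prRandomSubset_univ_zero (h𝓕 : ∀ i, ∀ S ∈ 𝓕 i, #S = ℓ)
    (hθ : ∀ i, 0 ≤ θ i ∧ θ i ≤ 1) (h : Tendsto (fun i => #(𝓕 i) * θ i ^ ℓ) l (𝓝 0)) :
    Tendsto (fun i => prRandomSubset univ (θ i) (fun A => ∃ S ∈ 𝓕 i, S ⊆ A)) l (𝓝 0) := by
  refine squeeze_zero (fun i => prRandomSubset_univ_nonneg (hθ i).1 (hθ i).2 _) (fun i => ?_) h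
  rw [← sum_pow_card_of_card_eq (h𝓕 i)]
  exact prRandomSubset_univ_le_sum_pow_card (hθ i).1 (hθ i).2 (𝓕 i)

theorem tendsto_prRandomSubset_univ_one (hℓ : 1 ≤ ℓ) (h𝓕 : ∀ i, ∀ S ∈ 𝓕 i, #S = ℓ)
    (hθ : ∀ i, 0 ≤ θ i ∧ θ i ≤ 1) {g : ι → ℕ → ℝ} (hg0 : ∀ i, ∀ k ∈ Icc 1 ℓ, 0 ≤ g i k)
    (hg : ∀ i, ∀ U : Finset (α i), 1 ≤ #U → #U ≤ ℓ → (#{T ∈ 𝓕 i | U ⊆ T} : ℝ) ≤ g i #U)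
    (hlim : ∀ k ∈ Icc 1 ℓ, Tendsto (fun i => #(𝓕 i) * θ i ^ k / g i k) l atTop) :
    Tendsto (fun i => prRandomSubset univ (θ i) (fun A => ∃ S ∈ 𝓕 i, S ⊆ A)) l (𝓝 1) := by
  set r := fun i => ∑ k ∈ Icc 1 ℓ, ℓ.choose k * g i k / (#(𝓕 i) * θ i ^ k)
  have hr : Tendsto r l (𝓝 0) := by
    rw [← sum_const_zero (s := Icc 1 ℓ)]
    refine tendsto_finsetSum _ fun k hk => ?_
    have := ((hlim k hk).inv_tendsto_atTop).const_mul (ℓ.choose k : ℝ)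
    rw [mul_zero] at this
    exact this.congr fun i => by rw [Pi.inv_apply, inv_div, mul_div_assoc]
  have hlower : ∀ᶠ i in l, 1 - r i ≤ prRandomSubset univ (θ i) (fun A => ∃ S ∈ 𝓕 i, S ⊆ A) := by
    filter_upwards [(hlim ℓ (mem_Icc.2 ⟨hℓ, le_rfl⟩)).eventually_gt_atTop 0] with i hi
    have hθ0 : θ i ≠ 0 := fun h => by simp [h, zero_pow (by omega : ℓ ≠ 0)] at hi
    have hne : (𝓕 i).Nonempty := nonempty_iff_ne_empty.2 fun h => by simp [h] at hi
    exact one_sub_sum_le_prRandomSubset_univ ((hθ i).1.lt_of_ne' hθ0) (hθ i).2 (h𝓕 i) hne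
      (hg0 i) (hg i)
  refine tendsto_of_tendsto_of_tendsto_of_le_of_le' (by simpa using hr.const_sub 1)
    tendsto_const_nhds hlower (Eventually.of_forall fun i => ?_)
  exact prRandomSubset_univ_le_one (hθ i).1 (hθ i).2 _

end ZeroOneLaws

section PowerScales

variable {ι : Type*} {l : Filter ι} {N θ : ι → ℝ} {ℓ : ℕ}

lemma tendsto_mul_pow_zero_of_isLittleO {Q t : ι → ℝ} (hQ : ∀ i, Q i ≠ 0)
    (ht : ∀ i, t i ^ ℓ = (Q i)⁻¹) (hℓ : 1 ≤ ℓ) (hNQ : N =O[l] Q) (ho : θ =o[l] t) :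
    Tendsto (fun i => N i * θ i ^ ℓ) l (𝓝 0) := by
  have h := hNQ.mul_isLittleO (ho.pow hℓ)
  simp_rw [ht, mul_inv_cancel₀ (hQ _)] at h
  exact (isLittleO_one_iff ℝ).1 h

lemma tendsto_mul_pow_atTop_of_isLittleO {Q t : ι → ℝ} (hQ : ∀ i, Q i ≠ 0)
    (ht : ∀ i, t i ^ ℓ = (Q i)⁻¹) (hℓ : 1 ≤ ℓ) (hN : ∀ i, 0 ≤ N i) (hθ : ∀ i, 0 ≤ θ i)
    (hQN : Q =O[l] N) (ho : t =o[l] θ) :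
    Tendsto (fun i => N i * θ i ^ ℓ) l atTop := by
  have h := (isBigO_refl Q l).mul_isLittleO (ho.pow hℓ)
  simp_rw [ht, mul_inv_cancel₀ (hQ _)] at h
  have h' := (isLittleO_one_left_iff ℝ).1 (h.trans_isBigO (hQN.mul (isBigO_refl _ l)))
  simpa only [Real.norm_of_nonneg (mul_nonneg (hN _) (pow_nonneg (hθ _) ℓ))] using h'

variable {k : ℕ}

lemma tendsto_mul_pow_atTop_of_le (hk : k ∈ Icc 1 ℓ) (hN : ∀ i, 0 ≤ N i)
    (hθ : ∀ i, 0 ≤ θ i ∧ θ i ≤ 1) (hz : Tendsto (fun i => N i * θ i ^ ℓ) l atTop) :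
    Tendsto (fun i => N i * θ i ^ k) l atTop := by
  obtain ⟨hk1, hkℓ⟩ := mem_Icc.1 hk
  have hN1 : ∀ᶠ i in l, 1 ≤ N i := by
    filter_upwards [hz.eventually_ge_atTop 1] with i hi
    exact hi.trans (mul_le_of_le_one_right (hN i) (pow_le_one₀ (hθ i).1 (hθ i).2))
  refine tendsto_atTop_of_mul_le_pow (m := ℓ) (by omega) one_pos
    ((tendsto_pow_atTop (by omega : k ≠ 0)).comp hz)
    (Eventually.of_forall fun i => mul_nonneg (hN i) (pow_nonneg (hθ i).1 k)) ?_
  filter_upwards [hN1] with i hi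
  simp only [Function.comp, one_mul, mul_pow, ← pow_mul, mul_comm ℓ k]
  exact mul_le_mul_of_nonneg_right (pow_le_pow_right₀ hi hkℓ) (pow_nonneg (hθ i).1 _)

lemma tendsto_mul_pow_div_zpow_atTop {q n : ι → ℕ} (hq : ∀ i, 0 < (q i : ℝ)) {b c : ℕ}
    (hk : 1 ≤ k) (hℓ : ℓ ≠ 0) (hN : ∀ i, 0 ≤ N i) (hNu : ∀ i, N i ≤ ((q i : ℝ) ^ n i) ^ ℓ)
    (hθ : ∀ i, 0 ≤ θ i) (hQN : (fun i => (q i : ℝ) ^ ((b * n i : ℤ) - c)) =O[l] N)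
    (hz : Tendsto (fun i => N i * θ i ^ ℓ) l atTop) :
    Tendsto (fun i => N i * θ i ^ k / (q i : ℝ) ^ (((b - k) * n i : ℤ) - c)) l atTop := by
  have hu : Tendsto (fun i => (q i : ℝ) ^ n i * θ i) l atTop :=
    tendsto_atTop_of_mul_le_pow hℓ one_pos hz
      (Eventually.of_forall fun i => mul_nonneg (pow_nonneg (hq i).le _) (hθ i))
      (Eventually.of_forall fun i => by
        rw [one_mul, mul_pow]
        exact mul_le_mul_of_nonneg_right (hNu i) (pow_nonneg (hθ i) ℓ))
  obtain ⟨c₃, hc₃, hQN⟩ := hQN.exists_pos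
  refine tendsto_atTop_mono' l ?_
    (((tendsto_pow_atTop (by omega : k ≠ 0)).comp hu).const_mul_atTop (inv_pos.2 hc₃))
  filter_upwards [hQN.bound] with i hi
  rw [Real.norm_of_nonneg (zpow_pos (hq i) _).le, Real.norm_of_nonneg (hN i)] at hi
  have hsplit : (q i : ℝ) ^ ((b * n i : ℤ) - c) =
      (q i : ℝ) ^ (((b - k) * n i : ℤ) - c) * ((q i : ℝ) ^ n i) ^ k := by
    rw [← pow_mul, ← zpow_natCast, ← zpow_add₀ (hq i).ne']
    push_cast
    ring_nf
  have hθk := pow_nonneg (hθ i) k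
  rw [Function.comp_apply, le_div_iff₀ (zpow_pos (hq i) _), mul_pow]
  calc c₃⁻¹ * (((q i : ℝ) ^ n i) ^ k * θ i ^ k) * (q i : ℝ) ^ (((b - k) * n i : ℤ) - c)
      = c₃⁻¹ * (q i : ℝ) ^ ((b * n i : ℤ) - c) * θ i ^ k := by rw [hsplit]; ring
    _ ≤ c₃⁻¹ * (c₃ * N i) * θ i ^ k := by gcongr
    _ = N i * θ i ^ k := by field_simp

noncomputable def codegreeBound (C : ℝ) (b c q n k : ℕ) : ℝ :=
  if k < b then C * (q : ℝ) ^ (((b - k) * n : ℤ) - c) else C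

lemma codegreeBound_nonneg {C : ℝ} (hC : 0 ≤ C) {q : ℕ} (hq : 0 < (q : ℝ)) (b c n k : ℕ) :
    0 ≤ codegreeBound C b c q n k := by
  unfold codegreeBound
  split_ifs
  · exact mul_nonneg hC (zpow_pos hq _).le
  · exact hC

lemma tendsto_mul_pow_div_codegreeBound {q n : ι → ℕ} (hq : ∀ i, 0 < (q i : ℝ)) {b c : ℕ}
    {C : ℝ} (hC : 0 < C) (hk : k ∈ Icc 1 ℓ) (hN : ∀ i, 0 ≤ N i)
    (hNu : ∀ i, N i ≤ ((q i : ℝ) ^ n i) ^ ℓ) (hθ : ∀ i, 0 ≤ θ i ∧ θ i ≤ 1)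
    (hQN : (fun i => (q i : ℝ) ^ ((b * n i : ℤ) - c)) =O[l] N)
    (hz : Tendsto (fun i => N i * θ i ^ ℓ) l atTop) :
    Tendsto (fun i => N i * θ i ^ k / codegreeBound C b c (q i) (n i) k) l atTop := by
  by_cases hkb : k < b
  · obtain ⟨hk1, hkℓ⟩ := mem_Icc.1 hk
    simp only [codegreeBound, if_pos hkb, mul_comm C, ← div_div]
    exact (tendsto_mul_pow_div_zpow_atTop hq hk1 (by omega) hN hNu (fun i => (hθ i).1) hQN
      hz).atTop_div_const hC
  · simp only [codegreeBound, if_neg hkb]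
    exact (tendsto_mul_pow_atTop_of_le hk hN hθ hz).atTop_div_const hC

end PowerScales

theorem stmt3_general (n q : ℕ → ℕ) (F : ℕ → Type) [∀ i, Field (F i)] [∀ i, Fintype (F i)]
    [∀ i, DecidableEq (F i)]
    (hq : ∀ i, Fintype.card (F i) = q i)
    (ℓ : ℕ) (hℓ : 1 ≤ ℓ)
    (𝓕 : ∀ i, Finset (Finset (Fin (n i) → F i)))
    (h𝓕 : ∀ i, ∀ S ∈ 𝓕 i, S.card = ℓ)
    (b c : ℕ)
    (hΘ : (fun i => ((𝓕 i).card : ℝ)) =Θ[atTop]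
      fun i => (q i : ℝ) ^ ((b * n i : ℤ) - (c : ℤ)))
    (hcount : ∃ C : ℝ, 0 < C ∧ ∀ i, ∀ S : Finset (Fin (n i) → F i),
      (1 ≤ S.card → S.card ≤ b - 1 →
        (((𝓕 i).filter (fun T => S ⊆ T)).card : ℝ)
          ≤ C * (q i : ℝ) ^ (((b - S.card) * n i : ℤ) - (c : ℤ))) ∧
      (b ≤ S.card → (((𝓕 i).filter (fun T => S ⊆ T)).card : ℝ) ≤ C))
    (θ : ℕ → ℝ) (hθ : ∀ i, 0 ≤ θ i ∧ θ i ≤ 1) :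
    (θ =o[atTop] (fun i => (q i : ℝ) ^ (((c : ℝ) - (b : ℝ) * (n i : ℝ)) / (ℓ : ℝ))) →
      Tendsto (fun i => prRandomSubset (Finset.univ : Finset (Fin (n i) → F i)) (θ i)
        (fun A => ∃ S ∈ 𝓕 i, S ⊆ A)) atTop (nhds 0)) ∧
    ((fun i => (q i : ℝ) ^ (((c : ℝ) - (b : ℝ) * (n i : ℝ)) / (ℓ : ℝ))) =o[atTop] θ →
      Tendsto (fun i => prRandomSubset (Finset.univ : Finset (Fin (n i) → F i)) (θ i)
        (fun A => ∃ S ∈ 𝓕 i, S ⊆ A)) atTop (nhds 1)) := by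
  obtain ⟨C, hC, hcodeg⟩ := hcount
  have hq0 : ∀ i, 0 < (q i : ℝ) := fun i => by rw [← hq]; exact_mod_cast Fintype.card_pos
  have hQ : ∀ i, (q i : ℝ) ^ ((b * n i : ℤ) - c) ≠ 0 := fun i => (zpow_pos (hq0 i) _).ne'
  have ht : ∀ i, ((q i : ℝ) ^ (((c : ℝ) - b * n i) / ℓ)) ^ ℓ =
      ((q i : ℝ) ^ ((b * n i : ℤ) - c))⁻¹ := fun i => by
    rw [← Real.rpow_natCast, ← Real.rpow_mul (hq0 i).le, div_mul_cancel₀ _ (by positivity),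
      ← Real.rpow_intCast, ← Real.rpow_neg (hq0 i).le]
    push_cast
    ring_nf
  have hN : ∀ i, (0 : ℝ) ≤ #(𝓕 i) := fun i => Nat.cast_nonneg _
  refine ⟨fun ho => tendsto_prRandomSubset_univ_zero h𝓕 hθ
    (tendsto_mul_pow_zero_of_isLittleO hQ ht hℓ hΘ.1 ho), fun ho => ?_⟩
  have hz := tendsto_mul_pow_atTop_of_isLittleO hQ ht hℓ hN (fun i => (hθ i).1) hΘ.2 ho
  refine tendsto_prRandomSubset_univ_one hℓ h𝓕 hθ
    (fun i k _ => codegreeBound_nonneg hC.le (hq0 i) b c (n i) k) (fun i U hU _ => ?_)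
    fun k hk => tendsto_mul_pow_div_codegreeBound hq0 hC hk hN (fun i => ?_) hθ hΘ.2 hz
  · unfold codegreeBound
    split_ifs with hUb
    · exact (hcodeg i U).1 hU (by omega)
    · exact (hcodeg i U).2 (by omega)
  · have h := card_le_card_pow_of_card_eq (h𝓕 i)
    rw [Fintype.card_fun, Fintype.card_fin, hq] at h
    exact_mod_cast h

theorem stmt3 (n q : ℕ → ℕ) (F : ℕ → Type) [∀ i, Field (F i)] [∀ i, Fintype (F i)]
    [∀ i, DecidableEq (F i)]
    (hq : ∀ i, Fintype.card (F i) = q i) (hqpp : ∀ i, IsPrimePow (q i))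
    (hnq : Tendsto (fun i => n i + q i) atTop atTop)
    (ℓ : ℕ) (hℓ : 1 ≤ ℓ)
    (𝓕 : ∀ i, Finset (Finset (Fin (n i) → F i)))
    (h𝓕 : ∀ i, ∀ S ∈ 𝓕 i, S.card = ℓ)
    (b c : ℕ) (hb : 0 < b)
    (hΘ : (fun i => ((𝓕 i).card : ℝ)) =Θ[atTop]
      fun i => (q i : ℝ) ^ ((b * n i : ℤ) - (c : ℤ)))
    (hcount : ∃ C : ℝ, 0 < C ∧ ∀ i, ∀ S : Finset (Fin (n i) → F i),
      (1 ≤ S.card → S.card ≤ b - 1 →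
        (((𝓕 i).filter (fun T => S ⊆ T)).card : ℝ)
          ≤ C * (q i : ℝ) ^ (((b - S.card) * n i : ℤ) - (c : ℤ))) ∧
      (b ≤ S.card → (((𝓕 i).filter (fun T => S ⊆ T)).card : ℝ) ≤ C))
    (θ : ℕ → ℝ) (hθ : ∀ i, 0 ≤ θ i ∧ θ i ≤ 1) :
    (θ =o[atTop] (fun i => (q i : ℝ) ^ (((c : ℝ) - (b : ℝ) * (n i : ℝ)) / (ℓ : ℝ))) →
      Tendsto (fun i => prRandomSubset (Finset.univ : Finset (Fin (n i) → F i)) (θ i)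
        (fun A => ∃ S ∈ 𝓕 i, S ⊆ A)) atTop (nhds 0)) ∧
    ((fun i => (q i : ℝ) ^ (((c : ℝ) - (b : ℝ) * (n i : ℝ)) / (ℓ : ℝ))) =o[atTop] θ →
      Tendsto (fun i => prRandomSubset (Finset.univ : Finset (Fin (n i) → F i)) (θ i)
        (fun A => ∃ S ∈ 𝓕 i, S ⊆ A)) atTop (nhds 1)) :=
  stmt3_general n q F hq ℓ hℓ 𝓕 h𝓕 b c hΘ hcount θ hθ
end

section
/- Suppose n, m are integers with 1 ≤ m < n, and q is a prime power, with n + q → ∞. Let X be the random subset of F_q^n in which each point is included independently with probability θ. Then, for any integer ℓ ≤ q^m with ℓ = ω((n−m)·m·log q), the event Γ that there exists an ℓ-rich m-flat with respect to X has sharp threshold ℓ·q^{−m}; that is, for every fixed ε > 0, Pr[Γ] → 0 whenever θ ≤ (1−ε)·ℓ·q^{−m} and Pr[Γ] → 1 whenever θ ≥ (1+ε)·ℓ·q^{−m}. -/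
open Filter Asymptotics

def IsFlat (K : Type*) {V : Type*} [Field K] [AddCommGroup V] [Module K V]
    (m : ℕ) (S : Set V) : Prop :=
  ∃ W : Submodule K V, Module.finrank K W = m ∧ ∃ v : V, S = (v + ·) '' (W : Set V)

def ExistsRichFlat (K : Type*) {V : Type*} [Field K] [AddCommGroup V] [Module K V]
    (m ℓ : ℕ) (A : Finset V) : Prop :=
  ∃ S : Set V, IsFlat K m S ∧ ℓ ≤ (S ∩ (A : Set V)).ncard

/-!
For a fixed m-flat L, the count |L ∩ X| is binomial with q^m trials, and the generating function
identity ∑_A P(A) x^|A ∩ L| = (θx + 1 - θ)^(q^m) gives Chernoff bounds: L is ℓ-rich with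
probability at most e^(-cℓ) if θq^m ≤ (1-ε)ℓ, and at least 1 - e^(-cℓ) if θq^m ≥ (1+ε)ℓ.
A single flat thus gives the 1-statement. For the 0-statement take a union bound over all m-flats;
double counting the pairs (ordered basis of the direction, point of the flat) shows there are at
most q^((m+1)(n-m)+m) ≤ q^(3(n-m)m) of them, and 3(n-m)m log q - cℓ → -∞ because
(n-m)m log q = o(ℓ). Since (n-m)m log q ≥ log 2, that hypothesis also forces ℓ → ∞.
-/

open Finset Module Real

namespace prRandomSubset

variable {α : Type*} {U : Finset α} {θ : ℝ}

lemma weight_nonneg (h0 : 0 ≤ θ) (h1 : θ ≤ 1) (a b : ℕ) : 0 ≤ θ ^ a * (1 - θ) ^ b :=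
  mul_nonneg (pow_nonneg h0 a) (pow_nonneg (sub_nonneg.2 h1) b)

lemma nonneg (h0 : 0 ≤ θ) (h1 : θ ≤ 1) (E : Finset α → Prop) :
    0 ≤ prRandomSubset U θ E :=
  sum_nonneg fun _ _ => by
    split
    · exact weight_nonneg h0 h1 _ _
    · exact le_rfl

lemma mono (h0 : 0 ≤ θ) (h1 : θ ≤ 1) {E E' : Finset α → Prop} (h : ∀ A, E A → E' A) :
    prRandomSubset U θ E ≤ prRandomSubset U θ E' := by
  refine sum_le_sum fun A _ => ?_
  by_cases hE : E A
  · rw [if_pos hE, if_pos (h A hE)]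
  · rw [if_neg hE]
    split
    · exact weight_nonneg h0 h1 _ _
    · exact le_rfl

lemma sum_weight_mul_pow_card_inter [DecidableEq α] {T : Finset α} (hT : T ⊆ U) (x : ℝ) :
    ∑ A ∈ U.powerset, θ ^ #A * (1 - θ) ^ (#U - #A) * x ^ #(A ∩ T)
      = (θ * x + (1 - θ)) ^ #T := by
  have hfactor : ∀ i ∈ U, θ * (if i ∈ T then x else 1) + (1 - θ)
      = if i ∈ T then θ * x + (1 - θ) else 1 := fun i _ => by split_ifs <;> ring
  have hprod : (θ * x + (1 - θ)) ^ #T = ∏ i ∈ U, (θ * (if i ∈ T then x else 1) + (1 - θ)) := by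
    rw [prod_congr rfl hfactor, prod_ite_mem, prod_const, inter_eq_right.2 hT]
  rw [hprod, prod_add]
  refine sum_congr rfl fun A hA => ?_
  rw [prod_mul_distrib, prod_const, prod_ite_mem, prod_const, prod_const,
    card_sdiff_of_subset (mem_powerset.1 hA)]
  ring

lemma sum_weight [DecidableEq α] :
    ∑ A ∈ U.powerset, θ ^ #A * (1 - θ) ^ (#U - #A) = 1 := by
  simpa using sum_weight_mul_pow_card_inter (θ := θ) (empty_subset U) 1

lemma le_one (h0 : 0 ≤ θ) (h1 : θ ≤ 1) (E : Finset α → Prop) : prRandomSubset U θ E ≤ 1 := by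
  classical
  rw [← sum_weight (U := U) (θ := θ)]
  refine sum_le_sum fun A _ => ?_
  split
  · exact le_rfl
  · exact weight_nonneg h0 h1 _ _

lemma add_not (E : Finset α → Prop) :
    prRandomSubset U θ E + prRandomSubset U θ (fun A => ¬ E A) = 1 := by
  classical
  rw [← sum_weight (U := U) (θ := θ), prRandomSubset, prRandomSubset, ← sum_add_distrib]
  refine sum_congr rfl fun A _ => ?_
  by_cases h : E A
  · rw [if_pos h, if_neg (not_not.2 h), add_zero]
  · rw [if_neg h, if_pos h, zero_add]

lemma exists_le_sum (h0 : 0 ≤ θ) (h1 : θ ≤ 1) {ι : Type*} (J : Finset ι)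
    (E : ι → Finset α → Prop) :
    prRandomSubset U θ (fun A => ∃ j ∈ J, E j A) ≤ ∑ j ∈ J, prRandomSubset U θ (E j) := by
  unfold prRandomSubset
  rw [sum_comm]
  refine sum_le_sum fun A _ => ?_
  have hite : ∀ j, 0 ≤ @ite ℝ (E j A) (Classical.propDecidable _)
      (θ ^ #A * (1 - θ) ^ (#U - #A)) 0 := fun j => by
    split
    · exact weight_nonneg h0 h1 _ _
    · exact le_rfl
  split
  · obtain ⟨j, hj, hE⟩ := ‹∃ j ∈ J, E j A›
    exact (if_pos hE).symm.le.trans (single_le_sum (fun j _ => hite j) hj)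
  · exact sum_nonneg fun j _ => hite j

-- Markov's inequality for x^|A ∩ T|: x ≥ 1 gives the upper tail, x ≤ 1 the lower tail.
lemma le_mgf_div_pow [DecidableEq α] (h0 : 0 ≤ θ) (h1 : θ ≤ 1) {T : Finset α} (hT : T ⊆ U)
    {x : ℝ} (hx : 0 < x) {ℓ : ℕ} {E : Finset α → Prop}
    (hE : ∀ A, E A → x ^ ℓ ≤ x ^ #(A ∩ T)) :
    prRandomSubset U θ E ≤ (θ * x + (1 - θ)) ^ #T / x ^ ℓ := by
  rw [← sum_weight_mul_pow_card_inter hT, sum_div]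
  refine sum_le_sum fun A _ => ?_
  have hw := weight_nonneg h0 h1 #A (#U - #A)
  split
  · rw [mul_div_assoc]
    exact le_mul_of_one_le_right hw ((one_le_div (pow_pos hx ℓ)).2 (hE A ‹_›))
  · positivity

lemma le_exp_of_pow_le [DecidableEq α] (h0 : 0 ≤ θ) (h1 : θ ≤ 1) {T : Finset α} (hT : T ⊆ U)
    {x : ℝ} (hx : 0 < x) {ℓ : ℕ} {E : Finset α → Prop}
    (hE : ∀ A, E A → x ^ ℓ ≤ x ^ #(A ∩ T)) :
    prRandomSubset U θ E ≤ exp (θ * #T * (x - 1) - ℓ * log x) := by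
  refine (le_mgf_div_pow h0 h1 hT hx hE).trans ?_
  have hbase : θ * x + (1 - θ) ≤ exp (θ * (x - 1)) := by
    linarith [add_one_le_exp (θ * (x - 1))]
  have hpow : (θ * x + (1 - θ)) ^ #T ≤ exp (θ * #T * (x - 1)) := by
    calc (θ * x + (1 - θ)) ^ #T ≤ exp (θ * (x - 1)) ^ #T :=
          pow_le_pow_left₀ (by nlinarith) hbase _
      _ = exp (θ * #T * (x - 1)) := by rw [← exp_nat_mul]; ring_nf
  rw [exp_sub, ← log_pow, exp_log (pow_pos hx ℓ)]
  exact div_le_div_of_nonneg_right hpow (pow_pos hx ℓ).le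

lemma upper_tail_le_exp [DecidableEq α] (h0 : 0 ≤ θ) (h1 : θ ≤ 1) {T : Finset α} (hT : T ⊆ U)
    {δ : ℝ} (hδ0 : 0 < δ) (hδ1 : δ < 1) {ℓ : ℕ} (hθ : θ * #T ≤ (1 - δ) * ℓ) :
    prRandomSubset U θ (fun A => ℓ ≤ #(A ∩ T)) ≤ exp ((δ + log (1 - δ)) * ℓ) := by
  have hx : 1 ≤ (1 - δ)⁻¹ := one_le_inv₀ (by linarith) |>.2 (by linarith)
  refine (le_exp_of_pow_le h0 h1 hT (by positivity) fun A hA => pow_le_pow_right₀ hx hA).trans ?_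
  refine exp_le_exp.2 ?_
  have hδ : 1 - δ ≠ 0 := (sub_pos.2 hδ1).ne'
  have hsub : (1 - δ)⁻¹ - 1 = δ * (1 - δ)⁻¹ := by field_simp; ring
  have hdrift : θ * #T * ((1 - δ)⁻¹ - 1) ≤ δ * ℓ := by
    calc θ * #T * ((1 - δ)⁻¹ - 1) ≤ (1 - δ) * ℓ * (δ * (1 - δ)⁻¹) := by
          rw [hsub]; exact mul_le_mul_of_nonneg_right hθ (by positivity)
      _ = δ * ℓ := by field_simp
  rw [log_inv]
  linarith

lemma lower_tail_le_exp [DecidableEq α] (h0 : 0 ≤ θ) (h1 : θ ≤ 1) {T : Finset α} (hT : T ⊆ U)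
    {ε : ℝ} (hε : 0 < ε) {ℓ : ℕ} (hθ : (1 + ε) * ℓ ≤ θ * #T) :
    prRandomSubset U θ (fun A => ¬ ℓ ≤ #(A ∩ T)) ≤ exp ((log (1 + ε) - ε) * ℓ) := by
  have hx : (1 + ε)⁻¹ ≤ 1 := inv_le_one_of_one_le₀ (by linarith)
  refine (le_exp_of_pow_le (ℓ := ℓ) h0 h1 hT (by positivity) fun A hA =>
    pow_le_pow_of_le_one (by positivity) hx (by omega)).trans ?_
  refine exp_le_exp.2 ?_
  have hsub : (1 + ε)⁻¹ - 1 = -(ε * (1 + ε)⁻¹) := by field_simp; ring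
  have hdrift : ε * ℓ ≤ θ * #T * (ε * (1 + ε)⁻¹) := by
    calc ε * ℓ = (1 + ε) * ℓ * (ε * (1 + ε)⁻¹) := by field_simp
      _ ≤ θ * #T * (ε * (1 + ε)⁻¹) := mul_le_mul_of_nonneg_right hθ (by positivity)
  rw [log_inv, hsub]
  linarith

end prRandomSubset

section Flats

variable {K V : Type*} [Field K] [AddCommGroup V] [Module K V]

lemma image_add_add_left_submodule {W : Submodule K V} {w : V} (hw : w ∈ W) (v : V) :
    (v + w + ·) '' (W : Set V) = (v + ·) '' (W : Set V) := by
  ext x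
  simp only [Set.image_add_left, Set.mem_preimage, SetLike.mem_coe]
  rw [show -(v + w) + x = (-v + x) - w by abel]
  exact W.sub_mem_iff_left hw

lemma IsFlat.ncard [Fintype K] [Finite V] {m : ℕ} {S : Set V} (hS : IsFlat K m S) :
    S.ncard = Fintype.card K ^ m := by
  obtain ⟨W, hW, v, rfl⟩ := hS
  rw [Set.ncard_image_of_injective _ (add_right_injective v), ← Nat.card_coe_set_eq,
    SetLike.coe_sort_coe, natCard_eq_pow_finrank (K := K), hW, Nat.card_eq_fintype_card]

lemma exists_isFlat {m : ℕ} (hm : m ≤ finrank K V) : ∃ S : Set V, IsFlat K m S := by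
  obtain ⟨b, hb⟩ := exists_linearIndependent_of_le_finrank hm
  exact ⟨_, Submodule.span K (Set.range b), by rw [finrank_span_eq_card hb, Fintype.card_fin],
    0, rfl⟩

variable (K V) in
open scoped Classical in
noncomputable def flats [Fintype V] (m : ℕ) : Finset (Finset V) :=
  {T | IsFlat K m (T : Set V)}

variable [Fintype V]

lemma mem_flats {m : ℕ} {T : Finset V} : T ∈ flats K V m ↔ IsFlat K m (T : Set V) := by
  classical
  simp [flats]

lemma card_of_mem_flats [Fintype K] {m : ℕ} {T : Finset V} (hT : T ∈ flats K V m) :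
    #T = Fintype.card K ^ m := by
  rw [← Set.ncard_coe_finset, (mem_flats.1 hT).ncard]

lemma exists_mem_flats {m : ℕ} (hm : m ≤ finrank K V) : ∃ T, T ∈ flats K V m := by
  obtain ⟨S, hS⟩ := exists_isFlat hm
  exact ⟨S.toFinite.toFinset, mem_flats.2 (by rwa [Set.Finite.coe_toFinset])⟩

lemma existsRichFlat_iff [DecidableEq V] {m ℓ : ℕ} {A : Finset V} :
    ExistsRichFlat K m ℓ A ↔ ∃ T ∈ flats K V m, ℓ ≤ #(A ∩ T) := by
  constructor
  · rintro ⟨S, hS, hℓ⟩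
    refine ⟨S.toFinite.toFinset, mem_flats.2 (by rwa [Set.Finite.coe_toFinset]), ?_⟩
    rwa [← Set.ncard_coe_finset, coe_inter, Set.Finite.coe_toFinset, Set.inter_comm]
  · rintro ⟨T, hT, hℓ⟩
    exact ⟨T, mem_flats.1 hT, by rwa [← coe_inter, Set.ncard_coe_finset, inter_comm]⟩

end Flats

section Counting

variable {K V : Type*} [Field K] [Fintype K] [AddCommGroup V] [Module K V]

lemma pow_le_card_linearIndependent [Finite V] {k : ℕ} (hk : k ≤ finrank K V) :
    Fintype.card K ^ ((finrank K V - 1) * k) ≤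
      Nat.card {s : Fin k → V // LinearIndependent K s} := by
  set q := Fintype.card K
  set n := finrank K V
  have hq : 2 ≤ q := Fintype.one_lt_card
  rw [card_linearIndependent hk]
  calc q ^ ((n - 1) * k) = (q ^ (n - 1)) ^ #(univ : Finset (Fin k)) := by
        rw [card_univ, Fintype.card_fin, pow_mul]
    _ ≤ ∏ i : Fin k, (q ^ n - q ^ (i : ℕ)) := pow_card_le_prod _ _ _ fun i _ => ?_
  have hin : (i : ℕ) < n := i.isLt.trans_le hk
  have hi : q ^ (i : ℕ) ≤ q ^ (n - 1) := Nat.pow_le_pow_right (by omega) (by omega)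
  have hn : 2 * q ^ (n - 1) ≤ q ^ n := by
    calc 2 * q ^ (n - 1) ≤ q * q ^ (n - 1) := Nat.mul_le_mul_right _ hq
      _ = q ^ n := by rw [← pow_succ']; congr 1; omega
  change q ^ (n - 1) ≤ q ^ n - q ^ (i : ℕ)
  omega

variable [Fintype V]

-- The pairs (b, v + w), with b an ordered basis of W and w ∈ W, all describe the flat v + W.
open scoped Classical in
lemma pow_le_card_preimage_isFlat {m : ℕ} {S : Set V} (hS : IsFlat K m S) :
    Fintype.card K ^ (m * m) ≤
      #{bv : (Fin m → V) × V | (bv.2 + ·) '' (Submodule.span K (Set.range bv.1) : Set V) = S} := by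
  obtain ⟨W, hW, v, rfl⟩ := hS
  let f : {s : Fin m → W // LinearIndependent K s} × W → (Fin m → V) × V :=
    fun p => (fun j => (p.1.1 j : V), v + p.2)
  calc Fintype.card K ^ (m * m) = Fintype.card K ^ ((m - 1) * m) * Fintype.card K ^ m := by
        rw [← pow_add]; congr 1; cases m <;> simp; ring
    _ ≤ #(univ : Finset ({s : Fin m → W // LinearIndependent K s} × W)) := by
        rw [card_univ, Fintype.card_prod, ← Nat.card_eq_fintype_card (α := W),
          natCard_eq_pow_finrank (K := K), hW, Nat.card_eq_fintype_card (α := K),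
          ← Nat.card_eq_fintype_card (α := {s : Fin m → W // LinearIndependent K s})]
        refine Nat.mul_le_mul_right _ ?_
        simpa only [hW] using pow_le_card_linearIndependent (K := K) (V := W) hW.ge
    _ ≤ _ := by
        refine card_le_card_of_injOn f (fun p _ => ?_) ?_
        · obtain ⟨⟨s, hs⟩, w⟩ := p
          have hspan : Submodule.span K (Set.range fun j => (s j : V)) = W := by
            change Submodule.span K (Set.range (W.subtype ∘ s)) = W
            rw [Set.range_comp, Submodule.span_image,
              hs.span_eq_top_of_card_eq_finrank' (by rw [Fintype.card_fin, hW]),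
              Submodule.map_subtype_top]
          simp only [coe_filter, Set.mem_ofPred_eq, f, hspan]
          exact ⟨mem_univ _, image_add_add_left_submodule w.2 v⟩
        · rintro ⟨⟨s, hs⟩, w⟩ - ⟨⟨s', hs'⟩, w'⟩ - h
          simp only [f, Prod.mk.injEq, add_right_inj] at h
          exact Prod.ext (Subtype.ext (funext fun j => Subtype.ext (congrFun h.1 j)))
            (Subtype.ext h.2)

lemma card_flats_mul_le (m : ℕ) :
    #(flats K V m) * Fintype.card K ^ (m * m) ≤ Fintype.card K ^ (finrank K V * (m + 1)) := by
  classical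
  calc #(flats K V m) * Fintype.card K ^ (m * m)
      ≤ #(univ : Finset ((Fin m → V) × V)) * 1 :=
        card_mul_le_card_mul
          (fun (T : Finset V) (bv : (Fin m → V) × V) =>
            (bv.2 + ·) '' (Submodule.span K (Set.range bv.1) : Set V) = T)
          (fun T hT => pow_le_card_preimage_isFlat (mem_flats.1 hT))
          (fun bv _ => card_le_one.2 fun T hT T' hT' =>
            coe_injective
              (((mem_bipartiteBelow _).1 hT).2.symm.trans ((mem_bipartiteBelow _).1 hT').2))
    _ = Fintype.card K ^ (finrank K V * (m + 1)) := by
        rw [mul_one, card_univ, Fintype.card_prod, Fintype.card_fun, Fintype.card_fin,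
          card_eq_pow_finrank (K := K), ← pow_succ, ← pow_mul]

lemma card_flats_le {m : ℕ} (hm : 1 ≤ m) (hmn : m < finrank K V) :
    #(flats K V m) ≤ Fintype.card K ^ (3 * ((finrank K V - m) * m)) := by
  have hq : 0 < Fintype.card K ^ (m * m) := pow_pos Fintype.card_pos _
  refine Nat.le_of_mul_le_mul_right ((card_flats_mul_le m).trans ?_) hq
  rw [← pow_add]
  refine Nat.pow_le_pow_right Fintype.card_pos ?_
  obtain ⟨k, hk⟩ := Nat.exists_eq_add_of_lt hmn
  rw [hk, show m + k + 1 - m = k + 1 by omega]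
  nlinarith

end Counting

section RichFlats

variable {K V : Type*} [Field K] [Fintype K] [AddCommGroup V] [Module K V] [Fintype V]
  {m ℓ : ℕ} {θ : ℝ}

lemma prRandomSubset_existsRichFlat_le (h0 : 0 ≤ θ) (h1 : θ ≤ 1) {δ : ℝ} (hδ0 : 0 < δ)
    (hδ1 : δ < 1) (hθ : θ * Fintype.card K ^ m ≤ (1 - δ) * ℓ) :
    prRandomSubset (univ : Finset V) θ (ExistsRichFlat K m ℓ) ≤
      #(flats K V m) * exp ((δ + log (1 - δ)) * ℓ) := by
  classical
  calc prRandomSubset (univ : Finset V) θ (ExistsRichFlat K m ℓ)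
      ≤ prRandomSubset (univ : Finset V) θ (fun A => ∃ T ∈ flats K V m, ℓ ≤ #(A ∩ T)) :=
        prRandomSubset.mono h0 h1 fun _ => existsRichFlat_iff.1
    _ ≤ ∑ T ∈ flats K V m, prRandomSubset (univ : Finset V) θ (fun A => ℓ ≤ #(A ∩ T)) :=
        prRandomSubset.exists_le_sum h0 h1 _ _
    _ ≤ ∑ _T ∈ flats K V m, exp ((δ + log (1 - δ)) * ℓ) := by
        refine sum_le_sum fun T hT => prRandomSubset.upper_tail_le_exp h0 h1 (subset_univ T)
          hδ0 hδ1 ?_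
        rwa [card_of_mem_flats hT, Nat.cast_pow]
    _ = #(flats K V m) * exp ((δ + log (1 - δ)) * ℓ) := by rw [sum_const, nsmul_eq_mul]

lemma prRandomSubset_existsRichFlat_le_exp (h0 : 0 ≤ θ) (h1 : θ ≤ 1) (hm : 1 ≤ m)
    (hmn : m < finrank K V) {δ : ℝ} (hδ0 : 0 < δ) (hδ1 : δ < 1)
    (hθ : θ ≤ (1 - δ) * ℓ / Fintype.card K ^ m) :
    prRandomSubset (univ : Finset V) θ (ExistsRichFlat K m ℓ) ≤
      exp (3 * (((finrank K V - m : ℕ) : ℝ) * m * log (Fintype.card K))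
        + (δ + log (1 - δ)) * ℓ) := by
  have hq : (0 : ℝ) < Fintype.card K := by exact_mod_cast Fintype.card_pos
  have hflats : (#(flats K V m) : ℝ) ≤
      exp (3 * (((finrank K V - m : ℕ) : ℝ) * m * log (Fintype.card K))) := by
    calc (#(flats K V m) : ℝ) ≤ (Fintype.card K : ℝ) ^ (3 * ((finrank K V - m) * m)) := by
          exact_mod_cast card_flats_le hm hmn
      _ = _ := by
          rw [← exp_log hq, ← exp_nat_mul, log_exp]
          push_cast
          rw [mul_assoc]
  refine (prRandomSubset_existsRichFlat_le h0 h1 hδ0 hδ1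
    ((le_div_iff₀ (pow_pos hq m)).1 hθ)).trans ?_
  rw [exp_add]
  exact mul_le_mul_of_nonneg_right hflats (exp_nonneg _)

lemma one_sub_exp_le_prRandomSubset_existsRichFlat (h0 : 0 ≤ θ) (h1 : θ ≤ 1)
    (hm : m ≤ finrank K V) {ε : ℝ} (hε : 0 < ε) (hθ : (1 + ε) * ℓ / Fintype.card K ^ m ≤ θ) :
    1 - exp ((log (1 + ε) - ε) * ℓ) ≤
      prRandomSubset (univ : Finset V) θ (ExistsRichFlat K m ℓ) := by
  classical
  have hq : (0 : ℝ) < Fintype.card K ^ m := pow_pos (by exact_mod_cast Fintype.card_pos) m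
  obtain ⟨T, hT⟩ := exists_mem_flats hm
  have hrich : prRandomSubset (univ : Finset V) θ (fun A => ℓ ≤ #(A ∩ T)) ≤
      prRandomSubset (univ : Finset V) θ (ExistsRichFlat K m ℓ) :=
    prRandomSubset.mono h0 h1 fun _ h => existsRichFlat_iff.2 ⟨T, hT, h⟩
  have htail := prRandomSubset.lower_tail_le_exp (ℓ := ℓ) h0 h1 (subset_univ T) hε
    (by rw [card_of_mem_flats hT, Nat.cast_pow]; exact (div_le_iff₀ hq).1 hθ)
  linarith [prRandomSubset.add_not (U := univ) (θ := θ) (fun A => ℓ ≤ #(A ∩ T))]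

variable (K) in
lemma log_two_le_mul_mul_log_card {a b : ℕ} (ha : 1 ≤ a) (hb : 1 ≤ b) :
    log 2 ≤ a * b * log (Fintype.card K) := by
  have hq : log 2 ≤ log (Fintype.card K) :=
    log_le_log two_pos (by exact_mod_cast Fintype.one_lt_card)
  have hab : (1 : ℝ) ≤ a * b := by exact_mod_cast Nat.one_le_iff_ne_zero.2 (by positivity)
  nlinarith [log_pos one_lt_two]

end RichFlats

namespace Asymptotics

open Filter

variable {ι : Type*} {l : Filter ι} {f g : ι → ℝ}

lemma IsLittleO.tendsto_atTop_of_le {a : ℝ} (ha : 0 < a) (hf : ∀ i, a ≤ f i)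
    (hg : ∀ i, 0 ≤ g i) (hfg : f =o[l] g) : Tendsto g l atTop := by
  have hone : (fun _ => (1 : ℝ)) =O[l] f :=
    IsBigO.of_bound a⁻¹ (Eventually.of_forall fun i => by
      rw [norm_one, Real.norm_of_nonneg (ha.le.trans (hf i))]
      exact (le_inv_mul_iff₀ ha).2 (by simpa using hf i))
  have := (isLittleO_one_left_iff ℝ).1 (hone.trans_isLittleO hfg)
  simpa only [Real.norm_of_nonneg (hg _)] using this

lemma IsLittleO.tendsto_const_mul_add_atBot (hfg : f =o[l] g) (hg : Tendsto g l atTop)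
    (C : ℝ) {c : ℝ} (hc : c < 0) : Tendsto (fun i => C * f i + c * g i) l atBot := by
  have hequiv : (fun i => C * f i + c * g i) ~[l] fun i => c * g i :=
    ((hfg.const_mul_left C).const_mul_right' (isUnit_iff_ne_zero.2 hc.ne)).add_isEquivalent
      IsEquivalent.refl
  exact hequiv.symm.tendsto_atBot (hg.const_mul_atTop_of_neg hc)

end Asymptotics

theorem stmt5_general (n m q ℓ : ℕ → ℕ) (F : ℕ → Type) [∀ i, Field (F i)] [∀ i, Fintype (F i)]
    (hm : ∀ i, 1 ≤ m i ∧ m i < n i)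
    (hq : ∀ i, Fintype.card (F i) = q i)
    (hℓω : (fun i => ((n i - m i : ℕ) : ℝ) * (m i : ℝ) * Real.log (q i)) =o[atTop]
      fun i => (ℓ i : ℝ))
    (ε : ℝ) (hε : 0 < ε)
    (θ : ℕ → ℝ) (hθ : ∀ i, 0 ≤ θ i ∧ θ i ≤ 1) :
    ((∀ i, θ i ≤ (1 - ε) * (ℓ i : ℝ) / (q i : ℝ) ^ m i) →
      Tendsto (fun i => prRandomSubset (Finset.univ : Finset (Fin (n i) → F i)) (θ i)
        (fun A => ExistsRichFlat (F i) (m i) (ℓ i) A)) atTop (nhds 0)) ∧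
    ((∀ i, (1 + ε) * (ℓ i : ℝ) / (q i : ℝ) ^ m i ≤ θ i) →
      Tendsto (fun i => prRandomSubset (Finset.univ : Finset (Fin (n i) → F i)) (θ i)
        (fun A => ExistsRichFlat (F i) (m i) (ℓ i) A)) atTop (nhds 1)) := by
  simp only [← hq] at hℓω ⊢
  have hdim (i : ℕ) : finrank (F i) (Fin (n i) → F i) = n i := by simp
  have hℓ : Tendsto (fun i => (ℓ i : ℝ)) atTop atTop :=
    hℓω.tendsto_atTop_of_le (log_pos one_lt_two)
      (fun i => log_two_le_mul_mul_log_card (F i) (by have := hm i; omega) (hm i).1)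
      fun i => Nat.cast_nonneg _
  refine ⟨fun hθle => ?_, fun hθge => ?_⟩
  · -- Cap ε below 1 so that the upper-tail rate δ + log (1 - δ) makes sense.
    set δ := min ε (1 / 2)
    have hδ0 : 0 < δ := lt_min hε one_half_pos
    have hδ1 : δ < 1 := (min_le_right _ _).trans_lt one_half_lt_one
    have hrate : δ + log (1 - δ) < 0 := by
      linarith [log_lt_sub_one_of_pos (by linarith : 0 < 1 - δ) (by linarith : 1 - δ ≠ 1)]
    have hbound (i : ℕ) :
        prRandomSubset (univ : Finset (Fin (n i) → F i)) (θ i) (ExistsRichFlat (F i) (m i) (ℓ i)) ≤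
        exp (3 * (((n i - m i : ℕ) : ℝ) * m i * log (Fintype.card (F i)))
          + (δ + log (1 - δ)) * ℓ i) := by
      have hθi : θ i ≤ (1 - δ) * ℓ i / Fintype.card (F i) ^ m i :=
        (hθle i).trans (by gcongr; exact min_le_left _ _)
      have := prRandomSubset_existsRichFlat_le_exp (V := Fin (n i) → F i) (hθ i).1 (hθ i).2
        (hm i).1 (by rw [hdim]; exact (hm i).2) hδ0 hδ1 hθi
      rwa [hdim] at this
    exact tendsto_of_tendsto_of_tendsto_of_le_of_le tendsto_const_nhds
      (tendsto_exp_atBot.comp (hℓω.tendsto_const_mul_add_atBot hℓ 3 hrate))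
      (fun i => prRandomSubset.nonneg (hθ i).1 (hθ i).2 _) hbound
  · have hrate : log (1 + ε) - ε < 0 := by
      linarith [log_lt_sub_one_of_pos (by linarith : 0 < 1 + ε) (by linarith : 1 + ε ≠ 1)]
    have hlim : Tendsto (fun i => 1 - exp ((log (1 + ε) - ε) * ℓ i)) atTop (nhds 1) := by
      simpa using tendsto_const_nhds.sub (tendsto_exp_atBot.comp (hℓ.const_mul_atTop_of_neg hrate))
    exact tendsto_of_tendsto_of_tendsto_of_le_of_le hlim tendsto_const_nhds
      (fun i => one_sub_exp_le_prRandomSubset_existsRichFlat (hθ i).1 (hθ i).2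
        (by rw [hdim]; exact (hm i).2.le) hε (hθge i))
      fun i => prRandomSubset.le_one (hθ i).1 (hθ i).2 _

theorem stmt5 (n m q ℓ : ℕ → ℕ) (F : ℕ → Type) [∀ i, Field (F i)] [∀ i, Fintype (F i)]
    (hm : ∀ i, 1 ≤ m i ∧ m i < n i)
    (hq : ∀ i, Fintype.card (F i) = q i) (hqpp : ∀ i, IsPrimePow (q i))
    (hnq : Tendsto (fun i => n i + q i) atTop atTop)
    (hℓq : ∀ i, ℓ i ≤ q i ^ m i)
    (hℓω : (fun i => ((n i - m i : ℕ) : ℝ) * (m i : ℝ) * Real.log (q i)) =o[atTop]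
      fun i => (ℓ i : ℝ))
    (ε : ℝ) (hε : 0 < ε)
    (θ : ℕ → ℝ) (hθ : ∀ i, 0 ≤ θ i ∧ θ i ≤ 1) :
    ((∀ i, θ i ≤ (1 - ε) * (ℓ i : ℝ) / (q i : ℝ) ^ m i) →
      Tendsto (fun i => prRandomSubset (Finset.univ : Finset (Fin (n i) → F i)) (θ i)
        (fun A => ExistsRichFlat (F i) (m i) (ℓ i) A)) atTop (nhds 0)) ∧
    ((∀ i, (1 + ε) * (ℓ i : ℝ) / (q i : ℝ) ^ m i ≤ θ i) →
      Tendsto (fun i => prRandomSubset (Finset.univ : Finset (Fin (n i) → F i)) (θ i)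
        (fun A => ExistsRichFlat (F i) (m i) (ℓ i) A)) atTop (nhds 1)) :=
  stmt5_general n m q ℓ F hm hq hℓω ε hε θ hθ
end

section
/- Let U be a finite set, ℓ a positive integer, and 𝓕 a family of ℓ-element subsets of U. Fix k with 1 ≤ k ≤ ℓ−1 and a real α > 0. If for every k-element subset R of U the number of elements of 𝓕 containing R is at most α·|𝓕|^{1−k/ℓ}, then |I_k(𝓕)| ≤ α·C(ℓ,k)·|𝓕|^{2−k/ℓ}, where C(ℓ,k) is the binomial coefficient. -/
open Filter Asymptotics

theorem stmt14 {α : Type*} [DecidableEq α] (U : Finset α) (ℓ k : ℕ)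
    (hk : 1 ≤ k ∧ k ≤ ℓ - 1)
    (F : Finset (Finset α)) (hF : ∀ S ∈ F, S ⊆ U ∧ S.card = ℓ)
    (a : ℝ) (ha : 0 < a)
    (hcount : ∀ R : Finset α, R.card = k →
      ((F.filter (fun S => R ⊆ S)).card : ℝ) ≤ a * (F.card : ℝ) ^ (1 - (k : ℝ) / (ℓ : ℝ))) :
    ((interPairs F k).card : ℝ) ≤ a * (ℓ.choose k : ℝ) *
      (F.card : ℝ) ^ (2 - (k : ℝ) / (ℓ : ℝ)) := by
  by_cases hn : F.card = 0
  · have hFempty : F = ∅ := Finset.card_eq_zero.mp hn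
    have : interPairs F k = ∅ := by simp [interPairs, hFempty]
    rw [this]
    simp only [Finset.card_empty, Nat.cast_zero]
    positivity
  have hnpos : (0 : ℝ) < (F.card : ℝ) := by positivity
  -- per-S bound
  have key : ∀ S ∈ F, ((F.filter fun T => (S ∩ T).card = k).card : ℝ) ≤
      (ℓ.choose k : ℝ) * (a * (F.card : ℝ) ^ (1 - (k : ℝ) / (ℓ : ℝ))) := by
    intro S hS
    have hsub : F.filter (fun T => (S ∩ T).card = k) ⊆
        (S.powersetCard k).biUnion fun R => F.filter (fun T => R ⊆ T) := by
      intro T hT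
      rw [Finset.mem_filter] at hT
      apply Finset.mem_biUnion.mpr
      refine ⟨S ∩ T, ?_, ?_⟩
      · exact Finset.mem_powersetCard.mpr ⟨Finset.inter_subset_left, hT.2⟩
      · exact Finset.mem_filter.mpr ⟨hT.1, Finset.inter_subset_right⟩
    calc ((F.filter fun T => (S ∩ T).card = k).card : ℝ)
        ≤ (((S.powersetCard k).biUnion fun R => F.filter (fun T => R ⊆ T)).card : ℝ) := by
          exact_mod_cast Finset.card_le_card hsub
      _ ≤ ∑ R ∈ S.powersetCard k, ((F.filter (fun T => R ⊆ T)).card : ℝ) := by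
          exact_mod_cast Finset.card_biUnion_le
      _ ≤ ∑ R ∈ S.powersetCard k, a * (F.card : ℝ) ^ (1 - (k : ℝ) / (ℓ : ℝ)) := by
          apply Finset.sum_le_sum
          intro R hR
          exact hcount R (Finset.mem_powersetCard.mp hR).2
      _ = (ℓ.choose k : ℝ) * (a * (F.card : ℝ) ^ (1 - (k : ℝ) / (ℓ : ℝ))) := by
          rw [Finset.sum_const, Finset.card_powersetCard, (hF S hS).2, nsmul_eq_mul]
  have hcardsum : (interPairs F k).card =
      ∑ S ∈ F, (F.filter fun T => (S ∩ T).card = k).card := by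
    rw [interPairs, Finset.card_filter, Finset.sum_product]
    exact Finset.sum_congr rfl fun S _ => (Finset.card_filter _ _).symm
  have hbound : ((interPairs F k).card : ℝ) ≤
      (F.card : ℝ) * ((ℓ.choose k : ℝ) * (a * (F.card : ℝ) ^ (1 - (k : ℝ) / (ℓ : ℝ)))) := by
    rw [hcardsum]
    push_cast
    calc ∑ S ∈ F, ((F.filter fun T => (S ∩ T).card = k).card : ℝ)
        ≤ ∑ _S ∈ F, (ℓ.choose k : ℝ) * (a * (F.card : ℝ) ^ (1 - (k : ℝ) / (ℓ : ℝ))) :=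
          Finset.sum_le_sum key
      _ = (F.card : ℝ) * ((ℓ.choose k : ℝ) * (a * (F.card : ℝ) ^ (1 - (k : ℝ) / (ℓ : ℝ)))) := by
          rw [Finset.sum_const, nsmul_eq_mul]
    
  have hrpow : (F.card : ℝ) ^ (2 - (k : ℝ) / (ℓ : ℝ)) =
      (F.card : ℝ) * (F.card : ℝ) ^ (1 - (k : ℝ) / (ℓ : ℝ)) := by
    rw [show (2 : ℝ) - (k : ℝ) / (ℓ : ℝ) = 1 + (1 - (k : ℝ) / (ℓ : ℝ)) by ring,
      Real.rpow_add hnpos, Real.rpow_one]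
  rw [hrpow]
  linarith [hbound]
end
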